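/- arXiv:1305.6802 — 6 statements merged into one kernel-verified Lean document; each statement's English description precedes it below -/
import Mathlib

section
/- Consider the homogeneous firework process on ℕ. If the series ∑_{n=0}^∞ ∏_{i=0}^n G_N(P(R < i+1)) diverges (equals +∞), then the process dies out almost surely; moreover the quenched survival probability P(V | 𝒩 = n) equals 0 for μ-almost every environment n ∈ ℕ^ℕ. -/
open MeasureTheory ProbabilityTheory Filter Set

noncomputable section

/-- The effective radius at vertex `i`: `0` if there are no stations at `i`, and the maximum
of the radii of the stations at `i` otherwise. -/
def effRadius (station : ℕ → ℕ) (r : ℕ → ℕ → ℝ) (i : ℕ) : ℝ :=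
  if h : station i = 0 then 0
  else (Finset.range (station i)).sup'
    (by simpa [Finset.nonempty_range_iff] using h) (r i)

/-- The set of activated vertices of the firework process on `ℕ`:
`0` is active iff there is at least one station at `0`, and `m+1` is active iff there is an
active vertex `i ≤ m` whose effective radius is at least `m+1-i`. -/
inductive FireworkActive (station : ℕ → ℕ) (r : ℕ → ℕ → ℝ) : ℕ → Prop
  | zero : 1 ≤ station 0 → FireworkActive station r 0
  | succ (i m : ℕ) : i ≤ m → FireworkActive station r i →
      ((m : ℝ) + 1 - (i : ℝ) ≤ effRadius station r i) → FireworkActive station r (m + 1)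

/-- Survival of the firework process: infinitely many vertices are activated. -/
def fireworkSurvives (station : ℕ → ℕ) (r : ℕ → ℕ → ℝ) : Prop :=
  {m : ℕ | FireworkActive station r m}.Infinite

/-- The probability generating function `G(t) = E[t^N]` of a law on `ℕ`. -/
def pgf (PN : Measure ℕ) (t : ℝ) : ℝ :=
  ∑' k : ℕ, (PN {k}).toReal * t ^ k

/-!
Let `B n` be the event that no station at a site `i ≤ n` has a radius reaching `n + 1`, so
that the fire started at the origin never gets past `n`. By independence and stationarity of the
sites, `P(B n) = ∏_{i ≤ n} G_N(P(R < i + 1))`, and if `B` first occurs at time `m`, the event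
`B n` (for `n > m`) forces the sites `m < i ≤ n` to behave as in `B (n - m - 1)`. Summing over
the first occurrence gives `∑_{n<N} P(B n) ≤ P(⋃ B) (1 + ∑_{n<N} P(B n))`, so a divergent
series forces `P(⋃ B) = 1`, while survival is contained in the complement of `⋃ B`. The
quenched statement follows from the annealed one by Fubini.
-/

open scoped ENNReal

section Renewal

variable {Ω : Type*} [MeasurableSpace Ω] {μ : Measure Ω} {B : ℕ → Set Ω}

theorem sum_range_measure_le_measure_iUnion_mul (hB : ∀ n, MeasurableSet (B n))
    (hrenewal : ∀ m n, m < n →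
      μ (disjointed B m ∩ B n) ≤ μ (disjointed B m) * μ (B (n - m - 1)))
    (N : ℕ) :
    ∑ n ∈ Finset.range N, μ (B n) ≤ μ (⋃ n, B n) * (1 + ∑ n ∈ Finset.range N, μ (B n)) := by
  set S := ∑ n ∈ Finset.range N, μ (B n)
  -- `w (n - m)` bounds the probability of `B n` given that `B` first occurs at `m ≤ n`
  let w : ℕ → ℝ≥0∞ := fun k => if k = 0 then 1 else μ (B (k - 1))
  have hB_le (n : ℕ) : μ (B n) ≤ ∑ m ∈ Finset.range (n + 1), μ (disjointed B m) * w (n - m) := by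
    have hcover : B n ⊆ ⋃ m ∈ Finset.range (n + 1), disjointed B m ∩ B n := by
      intro x hx
      have hx' : x ∈ partialSups (disjointed B) n := by
        rw [partialSups_disjointed]
        exact le_partialSups B n hx
      rw [partialSups_eq_biUnion_range] at hx'
      obtain ⟨m, hm, hxm⟩ := mem_iUnion₂.mp hx'
      exact mem_iUnion₂.mpr ⟨m, hm, hxm, hx⟩
    refine (measure_mono hcover).trans <| (measure_biUnion_finset_le _ _).trans <|
      Finset.sum_le_sum fun m hm => ?_
    rcases (Nat.lt_succ_iff.mp (Finset.mem_range.mp hm)).lt_or_eq with hmn | rfl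
    · simpa [w, Nat.sub_ne_zero_of_lt hmn, Nat.sub_sub] using hrenewal m n hmn
    · simpa [w] using measure_mono (μ := μ) inter_subset_left
  have hw (K : ℕ) (hK : K ≤ N + 1) : ∑ k ∈ Finset.range K, w k ≤ 1 + S := by
    calc ∑ k ∈ Finset.range K, w k ≤ ∑ k ∈ Finset.range (N + 1), w k :=
          Finset.sum_le_sum_of_subset (Finset.range_subset_range.mpr hK)
      _ = 1 + S := by simp [Finset.sum_range_succ', w, S, add_comm]
  calc S ≤ ∑ n ∈ Finset.range N, ∑ m ∈ Finset.range (n + 1), μ (disjointed B m) * w (n - m) :=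
        Finset.sum_le_sum fun n _ => hB_le n
    _ = ∑ m ∈ Finset.range N, μ (disjointed B m) * ∑ k ∈ Finset.range (N - m), w k := by
        simp_rw [Finset.sum_range_diag_flip N (fun m k => μ (disjointed B m) * w k), Finset.mul_sum]
    _ ≤ ∑ m ∈ Finset.range N, μ (disjointed B m) * (1 + S) :=
        Finset.sum_le_sum fun m _ => mul_le_mul_right (hw _ (by omega)) _
    _ = μ (⋃ m ∈ Finset.range N, disjointed B m) * (1 + S) := by
        rw [← Finset.sum_mul, measure_biUnion_finset
          (fun a _ b _ hab => disjoint_disjointed B hab) fun m _ => MeasurableSet.disjointed hB m]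
    _ ≤ μ (⋃ n, B n) * (1 + S) := mul_le_mul_left (measure_mono <|
        iUnion₂_subset fun m _ => (disjointed_subset B m).trans (subset_iUnion B m)) _

theorem measure_iUnion_eq_one_of_renewal [IsProbabilityMeasure μ] (hB : ∀ n, MeasurableSet (B n))
    (hrenewal : ∀ m n, m < n →
      μ (disjointed B m ∩ B n) ≤ μ (disjointed B m) * μ (B (n - m - 1)))
    (hdiv : ∑' n, μ (B n) = ∞) :
    μ (⋃ n, B n) = 1 := by
  set q := μ (⋃ n, B n)
  by_contra hq
  have hq1 : q < 1 := prob_le_one.lt_of_ne hq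
  have hbound (N : ℕ) : ∑ n ∈ Finset.range N, μ (B n) ≤ q / (1 - q) := by
    set S := ∑ n ∈ Finset.range N, μ (B n)
    have hS : S ≠ ∞ := ENNReal.sum_ne_top.mpr fun n _ => measure_ne_top μ (B n)
    have h := sum_range_measure_le_measure_iUnion_mul hB hrenewal N
    rw [ENNReal.le_div_iff_mul_le (Or.inl (tsub_pos_of_lt hq1).ne') (Or.inr hq1.ne_top),
      ENNReal.mul_sub fun _ _ => hS, mul_one, tsub_le_iff_right]
    simpa [mul_add, mul_comm] using h
  refine (ENNReal.div_lt_top hq1.ne_top (tsub_pos_of_lt hq1).ne').ne ?_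
  exact top_le_iff.mp (hdiv ▸ ENNReal.tsum_le_of_sum_range_le hbound)

end Renewal

theorem ProbabilityTheory.iIndep.sumElim_comap_prod {ι κ α β : Type*}
    [MeasurableSpace α] [MeasurableSpace β] {μ : Measure α} {ν : Measure β}
    {m₁ : ι → MeasurableSpace α} {m₂ : κ → MeasurableSpace β}
    (h₁ : iIndep m₁ μ) (h₂ : iIndep m₂ ν) :
    iIndep (Sum.elim (fun i => (m₁ i).comap Prod.fst) (fun j => (m₂ j).comap Prod.snd))
      (μ.prod ν) := by
  have := h₁.isProbabilityMeasure
  have := h₂.isProbabilityMeasure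
  rw [iIndep_iff] at h₁ h₂ ⊢
  intro s f hf
  have hL : ∀ i ∈ s.toLeft, ∃ A, MeasurableSet[m₁ i] A ∧ Prod.fst ⁻¹' A = f (.inl i) :=
    fun i hi => hf _ (Finset.mem_toLeft.mp hi)
  have hR : ∀ j ∈ s.toRight, ∃ C, MeasurableSet[m₂ j] C ∧ Prod.snd ⁻¹' C = f (.inr j) :=
    fun j hj => hf _ (Finset.mem_toRight.mp hj)
  choose! A hA hAf using hL
  choose! C hC hCf using hR
  have hinter : ⋂ x ∈ s, f x = (⋂ i ∈ s.toLeft, A i) ×ˢ (⋂ j ∈ s.toRight, C j) := by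
    ext ω
    simp only [mem_iInter, mem_prod]
    constructor
    · intro h
      exact ⟨fun i hi => by simpa [← hAf i hi] using h _ (Finset.mem_toLeft.mp hi),
        fun j hj => by simpa [← hCf j hj] using h _ (Finset.mem_toRight.mp hj)⟩
    · rintro ⟨hωA, hωC⟩ (i | j) hx
      · exact hAf i (Finset.mem_toLeft.mpr hx) ▸ hωA i (Finset.mem_toLeft.mpr hx)
      · exact hCf j (Finset.mem_toRight.mpr hx) ▸ hωC j (Finset.mem_toRight.mpr hx)
  rw [hinter, Measure.prod_prod, h₁ _ hA, h₂ _ hC, ← s.toLeft_disjSum_toRight,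
    Finset.prod_disjSum, Finset.toLeft_disjSum, Finset.toRight_disjSum]
  congr 1
  · refine Finset.prod_congr rfl fun i hi => ?_
    rw [← hAf i hi, ← prod_univ, Measure.prod_prod, measure_univ, mul_one]
  · refine Finset.prod_congr rfl fun j hj => ?_
    rw [← hCf j hj, ← univ_prod, Measure.prod_prod, measure_univ, one_mul]

def pgfENNReal (PN : Measure ℕ) (s : ℝ≥0∞) : ℝ≥0∞ := ∑' k, PN {k} * s ^ k

theorem pgfENNReal_toReal (PN : Measure ℕ) [IsFiniteMeasure PN] {s : ℝ≥0∞} (hs : s ≠ ∞) :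
    (pgfENNReal PN s).toReal = pgf PN s.toReal := by
  rw [pgfENNReal, ENNReal.tsum_toReal_eq fun k => ENNReal.mul_ne_top (measure_ne_top _ _)
    (ENNReal.pow_ne_top hs), pgf]
  simp_rw [ENNReal.toReal_mul, ENNReal.toReal_pow]

theorem effRadius_lt_iff (stn : ℕ → ℕ) (r : ℕ → ℕ → ℝ) (i : ℕ) {t : ℝ} (ht : 0 < t) :
    effRadius stn r i < t ↔ ∀ j < stn i, r i j < t := by
  unfold effRadius
  split_ifs with h
  · simp [h, ht]
  · simp [Finset.sup'_lt_iff]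

theorem FireworkActive.le_of_forall_effRadius_lt {stn : ℕ → ℕ} {r : ℕ → ℕ → ℝ} {n m : ℕ}
    (h : ∀ i ≤ n, effRadius stn r i < n + 1 - i) (hm : FireworkActive stn r m) : m ≤ n := by
  induction hm with
  | zero _ => exact n.zero_le
  | succ i m _ _ hreach ih =>
    by_contra! hnm
    have : (n : ℝ) + 1 - i ≤ m + 1 - i := by
      have : (n : ℝ) ≤ m := by exact_mod_cast Nat.lt_succ_iff.mp hnm
      linarith
    exact (h i ih).not_ge (this.trans hreach)

theorem not_fireworkSurvives_of_forall_effRadius_lt {stn : ℕ → ℕ} {r : ℕ → ℕ → ℝ} {n : ℕ}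
    (h : ∀ i ≤ n, effRadius stn r i < n + 1 - i) : ¬ fireworkSurvives stn r :=
  fun hsurv => hsurv <| (finite_Iic n).subset fun _ hm => hm.le_of_forall_effRadius_lt h

namespace Firework

abbrev Configuration := (ℕ → ℕ) × (ℕ → ℕ → ℝ)

/-- The coordinate `inl i` is the number of stations at site `i`, and `inr (i, j)` is the radius
of the `j`-th station at site `i`. -/
abbrev coordMS : ℕ ⊕ ℕ × ℕ → MeasurableSpace Configuration :=
  Sum.elim
    (fun i => (MeasurableSpace.comap (fun stn : ℕ → ℕ => stn i) inferInstance).comap Prod.fst)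
    (fun p => (MeasurableSpace.comap (fun r : ℕ → ℕ → ℝ => r p.1 p.2) inferInstance).comap
      Prod.snd)

def site : ℕ ⊕ ℕ × ℕ → ℕ := Sum.elim id Prod.fst

abbrev sitesMS (I : Set ℕ) : MeasurableSpace Configuration := ⨆ x ∈ site ⁻¹' I, coordMS x

theorem coordMS_le : ∀ x, coordMS x ≤ (inferInstance : MeasurableSpace Configuration)
  | .inl i => (MeasurableSpace.comap_mono (measurable_pi_apply i).comap_le).trans
      measurable_fst.comap_le
  | .inr p => (MeasurableSpace.comap_mono
      (show Measurable fun r : ℕ → ℕ → ℝ => r p.1 p.2 by fun_prop).comap_le).trans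
      measurable_snd.comap_le

theorem sitesMS_le (I : Set ℕ) : sitesMS I ≤ (inferInstance : MeasurableSpace Configuration) :=
  iSup₂_le fun x _ => coordMS_le x

theorem measurable_station {I : Set ℕ} {i : ℕ} (hi : i ∈ I) :
    Measurable[sitesMS I] fun ω : Configuration => ω.1 i :=
  Measurable.of_comap_le <| MeasurableSpace.comap_comp.symm.le.trans <|
    le_biSup coordMS (show Sum.inl i ∈ site ⁻¹' I from hi)

theorem measurable_radius {I : Set ℕ} {i : ℕ} (hi : i ∈ I) (j : ℕ) :
    Measurable[sitesMS I] fun ω : Configuration => ω.2 i j :=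
  Measurable.of_comap_le <| MeasurableSpace.comap_comp.symm.le.trans <|
    le_biSup coordMS (show Sum.inr (i, j) ∈ site ⁻¹' I from hi)

def radiiLt (i : ℕ) (t : ℝ) : Set Configuration := {ω | ∀ j < ω.1 i, ω.2 i j < t}

/-- No site of `s` ignites a vertex beyond `n`. -/
def blockedOn (s : Finset ℕ) (n : ℕ) : Set Configuration := ⋂ i ∈ s, radiiLt i (n + 1 - i)

def blocked (n : ℕ) : Set Configuration := blockedOn (Finset.range (n + 1)) n

theorem not_fireworkSurvives_of_mem_blocked {ω : Configuration} {n : ℕ} (h : ω ∈ blocked n) :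
    ¬ fireworkSurvives ω.1 ω.2 := by
  refine not_fireworkSurvives_of_forall_effRadius_lt (n := n) fun i hi => ?_
  have : (i : ℝ) ≤ n := by exact_mod_cast hi
  rw [effRadius_lt_iff _ _ _ (by linarith)]
  exact mem_iInter₂.mp h i (Finset.mem_range.mpr (Nat.lt_succ_of_le hi))

theorem measurableSet_radiiLt {I : Set ℕ} {i : ℕ} (hi : i ∈ I) (t : ℝ) :
    MeasurableSet[sitesMS I] (radiiLt i t) := by
  have hsplit : radiiLt i t = ⋃ k, (fun ω : Configuration => ω.1 i) ⁻¹' {k} ∩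
      ⋂ j ∈ Finset.range k, (fun ω : Configuration => ω.2 i j) ⁻¹' Iio t := by
    ext ω
    simp [radiiLt]
  rw [hsplit]
  exact .iUnion fun k => (measurable_station hi (measurableSet_singleton k)).inter
    (.biInter (Finset.countable_toSet _) fun j _ => measurable_radius hi j measurableSet_Iio)

theorem measurableSet_blockedOn {I : Set ℕ} {s : Finset ℕ} (hs : ∀ i ∈ s, i ∈ I) (n : ℕ) :
    MeasurableSet[sitesMS I] (blockedOn s n) :=
  .biInter s.countable_toSet fun i hi => measurableSet_radiiLt (hs i hi) _

theorem measurableSet_blocked (n : ℕ) : MeasurableSet (blocked n) :=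
  sitesMS_le univ _ (measurableSet_blockedOn (fun _ _ => mem_univ _) n)

theorem measurableSet_disjointed_blocked (m : ℕ) :
    MeasurableSet[sitesMS (Iic m)] (disjointed blocked m) := by
  rw [disjointed_eq_inter_compl]
  refine (measurableSet_blockedOn (fun i hi => ?_) m).inter
    (.biInter (to_countable _) fun j (hj : j < m) =>
      (measurableSet_blockedOn (fun i hi => ?_) j).compl)
  · simpa [Nat.lt_succ_iff] using hi
  · simp only [Finset.mem_range] at hi
    exact mem_Iic.mpr (by omega)

variable {PN : Measure ℕ} {PR : Measure ℝ} {μ : Measure (ℕ → ℕ)} {ν : Measure (ℕ → ℕ → ℝ)}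
  (hNlaw : ∀ i, μ.map (fun f => f i) = PN)
  (hNindep : iIndepFun (fun (i : ℕ) (f : ℕ → ℕ) => f i) μ)
  (hRlaw : ∀ p : ℕ × ℕ, ν.map (fun r => r p.1 p.2) = PR)
  (hRindep : iIndepFun (fun (p : ℕ × ℕ) (r : ℕ → ℕ → ℝ) => r p.1 p.2) ν)

include hNindep hRindep in
theorem indep_sitesMS {I J : Set ℕ} (hIJ : Disjoint I J) :
    Indep (sitesMS I) (sitesMS J) (μ.prod ν) :=
  indep_iSup_of_disjoint coordMS_le (iIndep.sumElim_comap_prod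
    ((iIndepFun_iff_iIndep _ _ _).mp hNindep) ((iIndepFun_iff_iIndep _ _ _).mp hRindep))
    (hIJ.preimage site)

include hNlaw hRlaw hRindep in
theorem measure_radiiLt [SFinite ν] (i : ℕ) (t : ℝ) :
    (μ.prod ν) (radiiLt i t) = pgfENNReal PN (PR (Iio t)) := by
  have hsplit : radiiLt i t = ⋃ k, ((fun f : ℕ → ℕ => f i) ⁻¹' {k}) ×ˢ
      ⋂ j ∈ Finset.range k, (fun r : ℕ → ℕ → ℝ => r i j) ⁻¹' Iio t := by
    ext ω
    simp [radiiLt]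
  have hstation (k : ℕ) : μ ((fun f : ℕ → ℕ => f i) ⁻¹' {k}) = PN {k} := by
    rw [← hNlaw i, Measure.map_apply (measurable_pi_apply i) (measurableSet_singleton k)]
  have hradius (j : ℕ) : ν ((fun r : ℕ → ℕ → ℝ => r i j) ⁻¹' Iio t) = PR (Iio t) := by
    rw [← hRlaw (i, j), Measure.map_apply (by fun_prop) measurableSet_Iio]
  have hradii (k : ℕ) :
      ν (⋂ j ∈ Finset.range k, (fun r : ℕ → ℕ → ℝ => r i j) ⁻¹' Iio t) = PR (Iio t) ^ k := by
    rw [(hRindep.precomp (Prod.mk_right_injective i)).measure_inter_preimage_eq_mul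
      (Finset.range k) (sets := fun _ => Iio t) fun _ _ => measurableSet_Iio]
    simp [hradius]
  rw [hsplit, measure_iUnion, pgfENNReal]
  · simp_rw [Measure.prod_prod, hstation, hradii]
  · exact fun k l hkl => Disjoint.set_prod_left ((disjoint_singleton.mpr hkl).preimage _) _ _
  · exact fun k => (measurable_pi_apply i (measurableSet_singleton k)).prod
      (.biInter (Finset.countable_toSet _) fun j _ =>
        (by fun_prop : Measurable fun r : ℕ → ℕ → ℝ => r i j) measurableSet_Iio)

variable [IsProbabilityMeasure μ] [IsProbabilityMeasure ν]

include hNindep hRindep in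
theorem measure_biInter_radiiLt (s : Finset ℕ) (t : ℕ → ℝ) :
    (μ.prod ν) (⋂ i ∈ s, radiiLt i (t i)) = ∏ i ∈ s, (μ.prod ν) (radiiLt i (t i)) := by
  induction s using Finset.induction_on with
  | empty => simp
  | insert a s ha ih =>
    rw [Finset.set_biInter_insert, Finset.prod_insert ha, ← ih]
    exact (Indep_iff _ _ _).mp
      (indep_sitesMS hNindep hRindep (disjoint_singleton_left.mpr ha)) _ _
      (measurableSet_radiiLt (mem_singleton a) _)
      (.biInter s.countable_toSet fun i hi => measurableSet_radiiLt hi _)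

include hNlaw hNindep hRlaw hRindep

theorem measure_blockedOn_Ico (a n : ℕ) :
    (μ.prod ν) (blockedOn (Finset.Ico a (n + 1)) n)
      = ∏ k ∈ Finset.range (n + 1 - a), pgfENNReal PN (PR (Iio (k + 1))) := by
  have hsite (i : ℕ) (hi : i ∈ Finset.Ico a (n + 1)) : (μ.prod ν) (radiiLt i (n + 1 - i))
      = pgfENNReal PN (PR (Iio ((n - i : ℕ) + 1))) := by
    have hin : i ≤ n := Nat.lt_succ_iff.mp (Finset.mem_Ico.mp hi).2
    rw [measure_radiiLt hNlaw hRlaw hRindep, Nat.cast_sub hin]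
    ring_nf
  rw [blockedOn, measure_biInter_radiiLt hNindep hRindep, Finset.prod_congr rfl hsite,
    Finset.prod_Ico_reflect (fun k => pgfENNReal PN (PR (Iio ((k : ℝ) + 1)))) a le_rfl,
    Nat.sub_self, Finset.range_eq_Ico]

theorem measure_blocked (n : ℕ) :
    (μ.prod ν) (blocked n) = ∏ k ∈ Finset.range (n + 1), pgfENNReal PN (PR (Iio (k + 1))) := by
  rw [blocked, Finset.range_eq_Ico, measure_blockedOn_Ico hNlaw hNindep hRlaw hRindep 0 n,
    Nat.sub_zero, Finset.range_eq_Ico]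

theorem measure_disjointed_blocked_inter_le {m n : ℕ} (hmn : m < n) :
    (μ.prod ν) (disjointed blocked m ∩ blocked n)
      ≤ (μ.prod ν) (disjointed blocked m) * (μ.prod ν) (blocked (n - m - 1)) := by
  have hsub : Finset.Ico (m + 1) (n + 1) ⊆ Finset.range (n + 1) := fun i hi => by
    simp only [Finset.mem_Ico, Finset.mem_range] at hi ⊢
    omega
  calc (μ.prod ν) (disjointed blocked m ∩ blocked n)
      ≤ (μ.prod ν) (disjointed blocked m ∩ blockedOn (Finset.Ico (m + 1) (n + 1)) n) :=
        measure_mono (inter_subset_inter_right _ (biInter_subset_biInter_left hsub))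
    _ = (μ.prod ν) (disjointed blocked m) *
          (μ.prod ν) (blockedOn (Finset.Ico (m + 1) (n + 1)) n) :=
        (Indep_iff _ _ _).mp (indep_sitesMS hNindep hRindep (Iic_disjoint_Ioi le_rfl)) _ _
          (measurableSet_disjointed_blocked m)
          (measurableSet_blockedOn (fun i hi => (Finset.mem_Ico.mp hi).1) n)
    _ = (μ.prod ν) (disjointed blocked m) * (μ.prod ν) (blocked (n - m - 1)) := by
        rw [measure_blockedOn_Ico hNlaw hNindep hRlaw hRindep,
          measure_blocked hNlaw hNindep hRlaw hRindep,
          show n - m - 1 + 1 = n + 1 - (m + 1) by omega]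

end Firework

open Firework

theorem firework_extinction_of_divergence_general
    (PN : Measure ℕ) (PR : Measure ℝ)
    [IsProbabilityMeasure PN] [IsProbabilityMeasure PR]
    (μ : Measure (ℕ → ℕ)) (ν : Measure (ℕ → ℕ → ℝ))
    [IsProbabilityMeasure μ] [IsProbabilityMeasure ν]
    -- the station numbers are i.i.d. with law `PN`
    (hNlaw : ∀ i : ℕ, μ.map (fun f => f i) = PN)
    (hNindep : iIndepFun (fun (i : ℕ) (f : ℕ → ℕ) => f i) μ)
    -- the radii are i.i.d. with law `PR`
    (hRlaw : ∀ p : ℕ × ℕ, ν.map (fun r => r p.1 p.2) = PR)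
    (hRindep : iIndepFun
      (fun (p : ℕ × ℕ) (r : ℕ → ℕ → ℝ) => r p.1 p.2) ν)
    -- divergence of the series `∑_n ∏_{i=0}^n G_N(P(R < i+1))`
    (hdiv : ¬ Summable (fun n : ℕ =>
      ∏ i ∈ Finset.range (n + 1), pgf PN ((PR (Set.Iio ((i : ℝ) + 1))).toReal))) :
    (μ.prod ν) {p : (ℕ → ℕ) × (ℕ → ℕ → ℝ) | fireworkSurvives p.1 p.2} = 0 ∧
    ∀ᵐ stn ∂μ, ν {r | fireworkSurvives stn r} = 0 := by
  have hdiv' : ∑' n, (μ.prod ν) (blocked n) = ∞ := by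
    by_contra hfin
    refine hdiv ((ENNReal.summable_toReal hfin).congr fun n => ?_)
    rw [measure_blocked hNlaw hNindep hRlaw hRindep, ENNReal.toReal_prod]
    exact Finset.prod_congr rfl fun i _ => pgfENNReal_toReal PN (measure_ne_top _ _)
  have hUnion : MeasurableSet (⋃ n, blocked n) := .iUnion measurableSet_blocked
  have hnull : (μ.prod ν) (⋃ n, blocked n)ᶜ = 0 :=
    (prob_compl_eq_zero_iff hUnion).mpr <| measure_iUnion_eq_one_of_renewal measurableSet_blocked
      (fun _ _ => measure_disjointed_blocked_inter_le hNlaw hNindep hRlaw hRindep) hdiv'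
  have hsub : {p : (ℕ → ℕ) × (ℕ → ℕ → ℝ) | fireworkSurvives p.1 p.2} ⊆ (⋃ n, blocked n)ᶜ :=
    fun ω hω => by simpa using fun n hn => not_fireworkSurvives_of_mem_blocked hn hω
  refine ⟨measure_mono_null hsub hnull, ?_⟩
  filter_upwards [(Measure.measure_prod_null hUnion.compl).mp hnull] with stn hstn
  exact measure_mono_null (fun r hr => hsub hr) hstn

/-- **Theorem 2(1)**: for the homogeneous firework process on `ℕ`, if
`∑_n ∏_{i=0}^n G_N(P(R < i+1)) = +∞` then the process dies out almost surely and the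
quenched survival probability is `0` for `μ`-almost every environment. -/
theorem firework_extinction_of_divergence
    (PN : Measure ℕ) (PR : Measure ℝ)
    [IsProbabilityMeasure PN] [IsProbabilityMeasure PR]
    (μ : Measure (ℕ → ℕ)) (ν : Measure (ℕ → ℕ → ℝ))
    [IsProbabilityMeasure μ] [IsProbabilityMeasure ν]
    -- the station numbers are i.i.d. with law `PN`
    (hNlaw : ∀ i : ℕ, μ.map (fun f => f i) = PN)
    (hNindep : iIndepFun (fun (i : ℕ) (f : ℕ → ℕ) => f i) μ)
    -- the radii are i.i.d. with law `PR`
    (hRlaw : ∀ p : ℕ × ℕ, ν.map (fun r => r p.1 p.2) = PR)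
    (hRindep : iIndepFun
      (fun (p : ℕ × ℕ) (r : ℕ → ℕ → ℝ) => r p.1 p.2) ν)
    -- the radii take values in `[0, ∞)` and `P(R < 1) ∈ (0,1)`
    (hRnonneg : PR (Set.Iio (0 : ℝ)) = 0)
    (hR1 : 0 < PR (Set.Iio (1 : ℝ)) ∧ PR (Set.Iio (1 : ℝ)) < 1)
    -- divergence of the series `∑_n ∏_{i=0}^n G_N(P(R < i+1))`
    (hdiv : ¬ Summable (fun n : ℕ =>
      ∏ i ∈ Finset.range (n + 1), pgf PN ((PR (Set.Iio ((i : ℝ) + 1))).toReal))) :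
    (μ.prod ν) {p : (ℕ → ℕ) × (ℕ → ℕ → ℝ) | fireworkSurvives p.1 p.2} = 0 ∧
    ∀ᵐ stn ∂μ, ν {r | fireworkSurvives stn r} = 0 :=
  firework_extinction_of_divergence_general PN PR μ ν hNlaw hNindep hRlaw hRindep hdiv
end
end

section
/- Consider the homogeneous firework process on ℕ. If liminf_{n→∞} n·(1 − G_N(P(R < n))) > 1, then P(V) > 0 and μ{n ∈ ℕ^ℕ : P(V | 𝒩 = n) > 0} = P(N > 0). -/
open MeasureTheory ProbabilityTheory Filter Set

noncomputable section

/-!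
Given the stations `s`, the event `blocked s n` has quenched probability
`∏_{i ∈ [1, n]} P(R < n + 1 - i) ^ sᵢ`, whose `μ`-mean is `∏_{k=1}^n q k` with
`q k = G_N(P(R < k))`. The liminf hypothesis gives `q k ≤ 1 - c / k` eventually for some `c > 1`,
so by Bernoulli's inequality these means are `O(n ^ (-c))`, hence summable, and
`∑ₙ ν (blocked s n) < ∞` for `μ`-a.e. `s`. For such an `s` with a station at `0`, pick `M` with
`∑_{n ≥ M} ν (blocked s n) < 1`. With positive probability none of these `blocked s n` occurs and,
independently (the radii involved sit at different sites), some station at `0` has radius `≥ M`;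
then every vertex is activated. Conversely, nothing is activated without a station at `0`.
-/

open scoped ENNReal

section Deterministic

variable {s : ℕ → ℕ} {r : ℕ → ℕ → ℝ}

lemma le_effRadius_iff {i : ℕ} {t : ℝ} (ht : 0 < t) :
    t ≤ effRadius s r i ↔ ∃ j < s i, t ≤ r i j := by
  unfold effRadius
  split_ifs with h
  · simp [h, not_le.2 ht]
  · simp [Finset.le_sup'_iff]

lemma fireworkActive_zero_iff : FireworkActive s r 0 ↔ 1 ≤ s 0 :=
  ⟨fun | .zero h => h, .zero⟩

lemma fireworkActive_succ_iff {m : ℕ} :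
    FireworkActive s r (m + 1) ↔
      ∃ i ≤ m, FireworkActive s r i ∧ ∃ j < s i, (m : ℝ) + 1 - i ≤ r i j := by
  have hpos : ∀ i ≤ m, (0 : ℝ) < m + 1 - i := fun i hi => by
    have : (i : ℝ) ≤ m := by exact_mod_cast hi
    linarith
  constructor
  · rintro (_ | ⟨i, _, him, hi, hr⟩)
    exact ⟨i, him, hi, (le_effRadius_iff (hpos i him)).1 hr⟩
  · rintro ⟨i, him, hi, hr⟩
    exact .succ i m him hi ((le_effRadius_iff (hpos i him)).2 hr)

lemma FireworkActive.one_le_station_zero {m : ℕ} (h : FireworkActive s r m) : 1 ≤ s 0 := by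
  induction h with
  | zero h => exact h
  | succ _ _ _ _ _ ih => exact ih

def radiiBelow (s : ℕ → ℕ) (I : Finset ℕ) (c : ℕ → ℝ) : Set (ℕ → ℕ → ℝ) :=
  {r | ∀ i ∈ I, ∀ j < s i, r i j < c i}

/-- No station of `[1, n]` reaches `n + 1`. -/
def blocked (s : ℕ → ℕ) (n : ℕ) : Set (ℕ → ℕ → ℝ) :=
  radiiBelow s (Finset.Ioc 0 n) fun i => ((n + 1 - i : ℕ) : ℝ)

lemma fireworkSurvives_of_escapes {M : ℕ} (h0 : r ∉ radiiBelow s {0} fun _ => (M : ℝ))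
    (hescape : ∀ n ≥ M, r ∉ blocked s n) : fireworkSurvives s r := by
  simp only [blocked, radiiBelow, Set.mem_ofPred_eq, not_forall, not_lt, Finset.mem_singleton,
    Finset.mem_Ioc, exists_prop] at h0 hescape
  obtain ⟨_, rfl, j₀, hj₀, hM⟩ := h0
  suffices ∀ m, FireworkActive s r m by simp [fireworkSurvives, this, Set.infinite_univ]
  intro m
  induction m using Nat.strong_induction_on with
  | _ m ih =>
    rcases m with _ | m
    · exact fireworkActive_zero_iff.2 (by omega)
    rw [fireworkActive_succ_iff]
    by_cases hm : m < M
    · refine ⟨0, m.zero_le, ih 0 (by omega), j₀, hj₀, ?_⟩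
      have : (m : ℝ) + 1 ≤ M := by exact_mod_cast hm
      simpa using this.trans hM
    · obtain ⟨i, ⟨hi0, him⟩, j, hj, hr⟩ := hescape m (by omega)
      refine ⟨i, him, ih i (by omega), j, hj, ?_⟩
      rwa [Nat.cast_sub (by omega), Nat.cast_add_one] at hr

end Deterministic

lemma measurable_fireworkActive (m : ℕ) :
    Measurable fun p : (ℕ → ℕ) × (ℕ → ℕ → ℝ) => FireworkActive p.1 p.2 m := by
  induction m using Nat.strong_induction_on with
  | _ m ih =>
    rcases m with _ | m
    · simp_rw [fireworkActive_zero_iff]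
      exact measurable_from_nat.comp ((measurable_pi_apply 0).comp measurable_fst)
    simp_rw [fireworkActive_succ_iff]
    refine Measurable.exists fun i => ?_
    by_cases him : i ≤ m
    · simp only [him, true_and]
      refine (ih i (by omega)).and (Measurable.exists fun j => ?_)
      exact (measurable_from_nat.comp ((measurable_pi_apply i).comp measurable_fst)).and
        (measurableSet_setOfPred.1 (measurableSet_le measurable_const (by fun_prop)))
    · simp [him]

lemma measurableSet_fireworkSurvives :
    MeasurableSet {p : (ℕ → ℕ) × (ℕ → ℕ → ℝ) | fireworkSurvives p.1 p.2} := by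
  simp_rw [fireworkSurvives, ← Nat.frequently_atTop_iff_infinite, frequently_atTop]
  exact measurableSet_setOfPred.2 <| Measurable.forall fun _ => Measurable.exists fun m =>
    measurable_const.and (measurable_fireworkActive m)

section Radii

abbrev radiiSigma (S : Set ℕ) : MeasurableSpace (ℕ → ℕ → ℝ) :=
  ⨆ p ∈ {p : ℕ × ℕ | p.1 ∈ S}, MeasurableSpace.comap (fun r => r p.1 p.2) inferInstance

lemma measurable_radius (p : ℕ × ℕ) : Measurable fun r : ℕ → ℕ → ℝ => r p.1 p.2 :=
  (measurable_pi_apply p.2).comp (measurable_pi_apply p.1)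

lemma radiiSigma_le (S : Set ℕ) : radiiSigma S ≤ MeasurableSpace.pi :=
  iSup₂_le fun p _ => (measurable_radius p).comap_le

lemma radiiBelow_eq_biInter (s : ℕ → ℕ) (I : Finset ℕ) (c : ℕ → ℝ) :
    radiiBelow s I c = ⋂ i ∈ I, ⋂ j ∈ Set.Iio (s i), (fun r => r i j) ⁻¹' Set.Iio (c i) := by
  ext
  simp [radiiBelow]

lemma measurable_radius_radiiSigma {S : Set ℕ} {i : ℕ} (hi : i ∈ S) (j : ℕ) :
    Measurable[radiiSigma S] fun r : ℕ → ℕ → ℝ => r i j :=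
  measurable_iff_comap_le.2 (le_iSup₂_of_le (i, j) hi le_rfl)

lemma measurableSet_radiiBelow {S : Set ℕ} {I : Finset ℕ} (hI : ↑I ⊆ S) (s : ℕ → ℕ)
    (c : ℕ → ℝ) : MeasurableSet[radiiSigma S] (radiiBelow s I c) := by
  rw [radiiBelow_eq_biInter]
  exact .biInter I.countable_toSet fun i hi => .biInter (Set.to_countable _) fun j _ =>
    measurable_radius_radiiSigma (hI hi) j measurableSet_Iio

variable {PR : Measure ℝ} {ν : Measure (ℕ → ℕ → ℝ)}

lemma indep_radiiSigma_compl (hRindep : iIndepFun (fun (p : ℕ × ℕ) r => r p.1 p.2) ν)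
    (S : Set ℕ) : Indep (radiiSigma S) (radiiSigma Sᶜ) ν :=
  indep_iSup_of_disjoint (fun p => (measurable_radius p).comap_le) hRindep.iIndep
    (Set.disjoint_left.2 fun _ h1 h2 => h2 h1)

lemma measure_radiiBelow (hRlaw : ∀ p : ℕ × ℕ, ν.map (fun r => r p.1 p.2) = PR)
    (hRindep : iIndepFun (fun (p : ℕ × ℕ) r => r p.1 p.2) ν) (s : ℕ → ℕ) (I : Finset ℕ)
    (c : ℕ → ℝ) : ν (radiiBelow s I c) = ∏ i ∈ I, PR (Set.Iio (c i)) ^ s i := by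
  set T : Finset (ℕ × ℕ) := I.biUnion fun i => {i} ×ˢ Finset.range (s i)
  have hT : ∀ p : ℕ × ℕ, p ∈ T ↔ p.1 ∈ I ∧ p.2 ∈ Finset.range (s p.1) := fun ⟨i, j⟩ => by
    simp [T]
  have hset :
      radiiBelow s I c = ⋂ p ∈ T, (fun r : ℕ → ℕ → ℝ => r p.1 p.2) ⁻¹' Set.Iio (c p.1) := by
    ext r
    simp only [radiiBelow, Set.mem_ofPred_eq, Set.mem_iInter, hT, Finset.mem_range]
    exact ⟨fun h p hp => h p.1 hp.1 p.2 hp.2, fun h i hi j hj => h (i, j) ⟨hi, hj⟩⟩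
  rw [hset, hRindep.meas_biInter fun p _ => ⟨_, measurableSet_Iio, rfl⟩,
    Finset.prod_finset_product T I (fun i => Finset.range (s i)) hT]
  refine Finset.prod_congr rfl fun i _ => ?_
  rw [Finset.prod_congr rfl fun j _ => by
    rw [← Measure.map_apply (measurable_radius (i, j)) measurableSet_Iio, hRlaw]]
  simp

end Radii

section Quenched

variable {PR : Measure ℝ} {ν : Measure (ℕ → ℕ → ℝ)}

lemma measure_blocked (hRlaw : ∀ p : ℕ × ℕ, ν.map (fun r => r p.1 p.2) = PR)
    (hRindep : iIndepFun (fun (p : ℕ × ℕ) r => r p.1 p.2) ν) (s : ℕ → ℕ) (n : ℕ) :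
    ν (blocked s n) = ∏ i ∈ Finset.Ioc 0 n, PR (Set.Iio ((n + 1 - i : ℕ) : ℝ)) ^ s i :=
  measure_radiiBelow hRlaw hRindep s _ _

lemma prob_compl_pos {Ω : Type*} [MeasurableSpace Ω] {P : Measure Ω} [IsProbabilityMeasure P]
    {t : Set Ω} (ht : MeasurableSet t) (h : P t < 1) : 0 < P tᶜ := by
  rw [prob_compl_eq_one_sub ht]
  exact tsub_pos_of_lt h

lemma measure_fireworkSurvives_pos [IsProbabilityMeasure ν]
    (hRlaw : ∀ p : ℕ × ℕ, ν.map (fun r => r p.1 p.2) = PR)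
    (hRindep : iIndepFun (fun (p : ℕ × ℕ) r => r p.1 p.2) ν)
    (hF : ∀ k : ℕ, PR (Set.Iio (k : ℝ)) < 1) {s : ℕ → ℕ} (hs0 : 1 ≤ s 0)
    (hsum : ∑' n, ν (blocked s n) ≠ ∞) : 0 < ν {r | fireworkSurvives s r} := by
  obtain ⟨M, hM⟩ :=
    ((ENNReal.tendsto_sum_nat_add _ hsum).eventually_lt_const zero_lt_one).exists
  set H := radiiBelow s {0} fun _ => (M : ℝ)
  set B := ⋃ k, blocked s (k + M)
  have hH : MeasurableSet[radiiSigma {0}] H := measurableSet_radiiBelow (by simp) _ _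
  have hB : MeasurableSet[radiiSigma {0}ᶜ] B := .iUnion fun k =>
    measurableSet_radiiBelow (fun i hi => (Finset.mem_Ioc.1 hi).1.ne') _ _
  have hHc : 0 < ν Hᶜ := by
    refine prob_compl_pos (radiiSigma_le _ _ hH) ?_
    rw [measure_radiiBelow hRlaw hRindep, Finset.prod_singleton]
    exact pow_lt_one₀ zero_le (hF M) (by omega)
  have hBc : 0 < ν Bᶜ := prob_compl_pos (radiiSigma_le _ _ hB) ((measure_iUnion_le _).trans_lt hM)
  calc 0 < ν Hᶜ * ν Bᶜ := ENNReal.mul_pos hHc.ne' hBc.ne'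
    _ = ν (Hᶜ ∩ Bᶜ) :=
      ((Indep_iff _ _ ν).1 (indep_radiiSigma_compl hRindep {0}) _ _ hH.compl hB.compl).symm
    _ ≤ ν {r | fireworkSurvives s r} := by
      refine measure_mono fun r ⟨hrH, hrB⟩ => fireworkSurvives_of_escapes hrH fun n hn h => ?_
      exact hrB (Set.mem_iUnion.2 ⟨n - M, by rwa [Nat.sub_add_cancel hn]⟩)

end Quenched

section GeneratingFunction

variable (PN : Measure ℕ)

lemma pgf_nonneg {t : ℝ} (ht : 0 ≤ t) : 0 ≤ pgf PN t :=
  tsum_nonneg fun _ => mul_nonneg ENNReal.toReal_nonneg (pow_nonneg ht _)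

lemma lintegral_pow_eq_ofReal_pgf [IsFiniteMeasure PN] {x : ℝ≥0∞} (hx : x ≤ 1) :
    ∫⁻ m, x ^ m ∂PN = ENNReal.ofReal (pgf PN x.toReal) := by
  have hfin : ∫⁻ m, x ^ m ∂PN ≠ ∞ := ne_top_of_le_ne_top (measure_ne_top PN Set.univ)
    ((lintegral_mono fun _ => pow_le_one' hx _).trans_eq lintegral_one)
  rw [← ENNReal.ofReal_toReal hfin, lintegral_countable', pgf,
    ENNReal.tsum_toReal_eq fun m => ENNReal.mul_ne_top
      (ENNReal.pow_ne_top (ne_top_of_le_ne_top ENNReal.one_ne_top hx)) (measure_ne_top _ _)]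
  simp_rw [ENNReal.toReal_mul, ENNReal.toReal_pow, mul_comm]

lemma pgf_one [IsProbabilityMeasure PN] : pgf PN 1 = 1 := by
  have h := lintegral_pow_eq_ofReal_pgf PN (le_refl (1 : ℝ≥0∞))
  simp only [one_pow, lintegral_const, measure_univ, mul_one, ENNReal.toReal_one] at h
  exact ENNReal.ofReal_eq_one.1 h.symm

lemma lt_one_of_pgf_lt_one [IsProbabilityMeasure PN] {x : ℝ≥0∞} (hx : x ≤ 1)
    (h : pgf PN x.toReal < 1) : x < 1 :=
  hx.lt_of_ne fun hx1 => by simp [hx1, pgf_one] at h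

lemma measure_pos_ne_zero_of_pgf_lt_one [IsProbabilityMeasure PN] {x : ℝ≥0∞} (hx : x ≤ 1)
    (h : pgf PN x.toReal < 1) : PN {k | 0 < k} ≠ 0 := by
  intro h0
  have hone : ∀ᵐ m ∂PN, x ^ m = 1 :=
    (measure_eq_zero_iff_ae_notMem.1 h0).mono fun m hm => by simp_all
  have hpgf : ENNReal.ofReal (pgf PN x.toReal) = 1 := by
    rw [← lintegral_pow_eq_ofReal_pgf PN hx, lintegral_congr_ae hone]
    simp
  exact h.ne (ENNReal.ofReal_eq_one.1 hpgf)

end GeneratingFunction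

lemma one_sub_div_le_rpow {c : ℝ} (hc : 1 ≤ c) (n : ℕ) :
    1 - c / (n + 1) ≤ ((n : ℝ) / (n + 1)) ^ c := by
  have hs : -1 ≤ -1 / ((n : ℝ) + 1) := by
    rw [neg_div, neg_le_neg_iff, div_le_one (by positivity)]
    simp
  convert one_add_mul_self_le_rpow_one_add hs hc using 1
  · ring
  · congr 1
    field_simp
    ring

lemma prod_Ioc_le_div_rpow {q : ℕ → ℝ} {c : ℝ} (hc : 1 ≤ c) {L : ℕ} (hL : 1 ≤ L)
    (hq : ∀ k > L, 0 ≤ q k ∧ q k ≤ 1 - c / k) {n : ℕ} (hn : L ≤ n) :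
    ∏ k ∈ Finset.Ioc L n, q k ≤ ((L : ℝ) / n) ^ c := by
  induction n, hn using Nat.le_induction with
  | base => simp [div_self (by positivity : (L : ℝ) ≠ 0)]
  | succ n hn ih =>
    have hn0 : (0 : ℝ) < n := by exact_mod_cast hL.trans hn
    obtain ⟨hq0, hq1⟩ := hq (n + 1) (by omega)
    rw [Finset.prod_Ioc_succ_top hn]
    calc _ ≤ ((L : ℝ) / n) ^ c * ((n : ℝ) / (n + 1)) ^ c :=
          mul_le_mul ih (hq1.trans (by exact_mod_cast one_sub_div_le_rpow hc n)) hq0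
            (by positivity)
      _ = ((L : ℝ) / (n + 1 : ℕ)) ^ c := by
          rw [← Real.mul_rpow (by positivity) (by positivity)]
          congr 1
          field_simp
          push_cast
          ring

lemma summable_prod_Ioc_of_le_one_sub_div {q : ℕ → ℝ} (hq0 : ∀ k, 0 ≤ q k) {c : ℝ}
    (hc : 1 < c) (hq : ∀ᶠ k : ℕ in atTop, q k ≤ 1 - c / k) :
    Summable fun n => ∏ k ∈ Finset.Ioc 0 n, q k := by
  obtain ⟨L, hL⟩ := (hq.and (eventually_ge_atTop 1)).exists_forall_of_atTop
  refine Summable.of_norm_bounded_eventually_nat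
    ((Real.summable_nat_rpow_inv.2 hc).mul_left ((∏ k ∈ Finset.Ioc 0 L, q k) * L ^ c)) ?_
  filter_upwards [eventually_ge_atTop L] with n hn
  rw [Real.norm_of_nonneg (Finset.prod_nonneg fun k _ => hq0 k),
    ← Finset.prod_Ioc_consecutive _ L.zero_le hn, mul_assoc, ← div_eq_mul_inv,
    ← Real.div_rpow (by positivity) (by positivity)]
  exact mul_le_mul_of_nonneg_left
    (prod_Ioc_le_div_rpow hc.le (hL L le_rfl).2 (fun k hk => ⟨hq0 k, (hL k hk.le).1⟩) hn)
    (Finset.prod_nonneg fun k _ => hq0 k)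

lemma exists_le_one_sub_div_of_one_lt_liminf {u : ℕ → ℝ}
    (h : 1 < liminf (fun n : ℕ => ENNReal.ofReal (n * (1 - u n))) atTop) :
    ∃ c > 1, ∀ᶠ n : ℕ in atTop, u n ≤ 1 - c / n := by
  obtain ⟨c, hc1, hc⟩ := exists_between h
  have hctop : c ≠ ∞ := hc.ne_top
  refine ⟨c.toReal, ?_, ?_⟩
  · change 1 < c.toReal
    rwa [← ENNReal.toReal_one, ENNReal.toReal_lt_toReal ENNReal.one_ne_top hctop]
  filter_upwards [eventually_lt_of_lt_liminf hc, eventually_gt_atTop 0] with n hn hn0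
  have hlt : c.toReal / n < 1 - u n := by
    rw [div_lt_iff₀ (by exact_mod_cast hn0)]
    linarith [(ENNReal.lt_ofReal_iff_toReal_lt hctop).1 hn]
  linarith

section Annealed

variable {PN : Measure ℕ} {PR : Measure ℝ} {μ : Measure (ℕ → ℕ)} {ν : Measure (ℕ → ℕ → ℝ)}
  [IsProbabilityMeasure PN] [IsProbabilityMeasure PR]

lemma lintegral_measure_blocked (hNlaw : ∀ i : ℕ, μ.map (fun f => f i) = PN)
    (hNindep : iIndepFun (fun (i : ℕ) (f : ℕ → ℕ) => f i) μ)
    (hRlaw : ∀ p : ℕ × ℕ, ν.map (fun r => r p.1 p.2) = PR)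
    (hRindep : iIndepFun (fun (p : ℕ × ℕ) r => r p.1 p.2) ν) (n : ℕ) :
    ∫⁻ s, ν (blocked s n) ∂μ =
      ENNReal.ofReal (∏ k ∈ Finset.Ioc 0 n, pgf PN (PR (Set.Iio (k : ℝ))).toReal) := by
  set x : ℕ → ℝ≥0∞ := fun i => PR (Set.Iio ((n + 1 - i : ℕ) : ℝ))
  have hsite : ∀ i, ∫⁻ s : ℕ → ℕ, x i ^ s i ∂μ = ENNReal.ofReal (pgf PN (x i).toReal) := by
    intro i
    rw [← lintegral_pow_eq_ofReal_pgf PN prob_le_one, ← hNlaw i,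
      lintegral_map measurable_from_nat (measurable_pi_apply i)]
  calc ∫⁻ s, ν (blocked s n) ∂μ = ∫⁻ s, ∏ i ∈ Finset.Ioc 0 n, x i ^ s i ∂μ := by
        simp_rw [measure_blocked hRlaw hRindep]
        rfl
    _ = ∏ i ∈ Finset.Ioc 0 n, ∫⁻ s, x i ^ s i ∂μ :=
        lintegral_prod_eq_prod_lintegral_of_indepFun _ (fun i (s : ℕ → ℕ) => x i ^ s i)
          (hNindep.comp _ fun _ => measurable_from_nat)
          fun i => measurable_from_nat.comp (measurable_pi_apply i)
    _ = ∏ k ∈ Finset.Ioc 0 n, ENNReal.ofReal (pgf PN (PR (Set.Iio (k : ℝ))).toReal) := by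
        simp_rw [hsite]
        refine Finset.prod_nbij' (fun i => n + 1 - i) (fun k => n + 1 - k) ?_ ?_ ?_ ?_ ?_ <;>
          intro i hi <;> simp only [Finset.mem_Ioc] at hi ⊢
        all_goals first | omega | rfl
    _ = _ := (ENNReal.ofReal_prod_of_nonneg fun _ _ => pgf_nonneg PN ENNReal.toReal_nonneg).symm

lemma ae_tsum_measure_blocked_ne_top (hNlaw : ∀ i : ℕ, μ.map (fun f => f i) = PN)
    (hNindep : iIndepFun (fun (i : ℕ) (f : ℕ → ℕ) => f i) μ)
    (hRlaw : ∀ p : ℕ × ℕ, ν.map (fun r => r p.1 p.2) = PR)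
    (hRindep : iIndepFun (fun (p : ℕ × ℕ) r => r p.1 p.2) ν) {c : ℝ} (hc : 1 < c)
    (hq : ∀ᶠ k : ℕ in atTop, pgf PN (PR (Set.Iio (k : ℝ))).toReal ≤ 1 - c / k) :
    ∀ᵐ s ∂μ, ∑' n, ν (blocked s n) ≠ ∞ := by
  have hmeas : ∀ n, Measurable fun s : ℕ → ℕ => ν (blocked s n) := fun n => by
    simp_rw [measure_blocked hRlaw hRindep]
    exact Finset.measurable_prod _ fun i _ => measurable_from_nat.comp (measurable_pi_apply i)
  refine (ae_lt_top (Measurable.tsum hmeas) ?_).mono fun s hs => hs.ne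
  rw [lintegral_tsum fun n => (hmeas n).aemeasurable]
  simp_rw [lintegral_measure_blocked hNlaw hNindep hRlaw hRindep]
  have hq0 : ∀ k : ℕ, 0 ≤ pgf PN (PR (Set.Iio (k : ℝ))).toReal :=
    fun _ => pgf_nonneg PN ENNReal.toReal_nonneg
  rw [← ENNReal.ofReal_tsum_of_nonneg (fun n => Finset.prod_nonneg fun k _ => hq0 k)
    (summable_prod_Ioc_of_le_one_sub_div hq0 hc hq)]
  exact ENNReal.ofReal_ne_top

end Annealed

theorem firework_survival_of_liminf_general
    (PN : Measure ℕ) (PR : Measure ℝ)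
    [IsProbabilityMeasure PN] [IsProbabilityMeasure PR]
    (μ : Measure (ℕ → ℕ)) (ν : Measure (ℕ → ℕ → ℝ))
    [IsProbabilityMeasure ν]
    -- the station numbers are i.i.d. with law `PN`
    (hNlaw : ∀ i : ℕ, μ.map (fun f => f i) = PN)
    (hNindep : iIndepFun (fun (i : ℕ) (f : ℕ → ℕ) => f i) μ)
    -- the radii are i.i.d. with law `PR`
    (hRlaw : ∀ p : ℕ × ℕ, ν.map (fun r => r p.1 p.2) = PR)
    (hRindep : iIndepFun
      (fun (p : ℕ × ℕ) (r : ℕ → ℕ → ℝ) => r p.1 p.2) ν)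
    -- `liminf_n n (1 - G_N(P(R < n))) > 1` (the nonnegative sequence is viewed in `ℝ≥0∞`)
    (hliminf : 1 < Filter.liminf (fun n : ℕ =>
      ENNReal.ofReal ((n : ℝ) * (1 - pgf PN ((PR (Set.Iio (n : ℝ))).toReal)))) Filter.atTop) :
    0 < (μ.prod ν) {p : (ℕ → ℕ) × (ℕ → ℕ → ℝ) | fireworkSurvives p.1 p.2} ∧
    μ {stn | 0 < ν {r | fireworkSurvives stn r}} = PN {k : ℕ | 0 < k} := by
  obtain ⟨c, hc, hq⟩ := exists_le_one_sub_div_of_one_lt_liminf hliminf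
  have hq_lt : ∀ᶠ k : ℕ in atTop, pgf PN (PR (Set.Iio (k : ℝ))).toReal < 1 := by
    filter_upwards [hq, eventually_gt_atTop 0] with k hk hk0
    linarith [show 0 < c / k by positivity]
  have hF : ∀ k : ℕ, PR (Set.Iio (k : ℝ)) < 1 := fun k => by
    obtain ⟨n, hn, hkn⟩ := (hq_lt.and (eventually_ge_atTop k)).exists
    exact (measure_mono (Set.Iio_subset_Iio (Nat.cast_le.2 hkn))).trans_lt
      (lt_one_of_pgf_lt_one PN prob_le_one hn)
  have hN : PN {k | 0 < k} ≠ 0 :=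
    let ⟨_, hn⟩ := hq_lt.exists
    measure_pos_ne_zero_of_pgf_lt_one PN prob_le_one hn
  have hstation : μ {s | 1 ≤ s 0} = PN {k | 0 < k} := by
    rw [← hNlaw 0, Measure.map_apply (measurable_pi_apply 0) .of_discrete]
    rfl
  have hquenched : ∀ᵐ s ∂μ, 1 ≤ s 0 → 0 < ν {r | fireworkSurvives s r} :=
    (ae_tsum_measure_blocked_ne_top hNlaw hNindep hRlaw hRindep hc hq).mono fun s hs hs0 =>
      measure_fireworkSurvives_pos hRlaw hRindep hF hs0 hs
  have hpos_eq : μ {s | 0 < ν {r | fireworkSurvives s r}} = PN {k | 0 < k} := by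
    refine hstation ▸ le_antisymm (measure_mono fun s hs => ?_) (measure_mono_ae hquenched)
    obtain ⟨r, hr⟩ := nonempty_of_measure_ne_zero hs.ne'
    exact hr.nonempty.some_mem.one_le_station_zero
  refine ⟨?_, hpos_eq⟩
  rw [Measure.prod_apply measurableSet_fireworkSurvives,
    lintegral_pos_iff_support (measurable_measure_prodMk_left measurableSet_fireworkSurvives)]
  rw [← hpos_eq] at hN
  simpa [Function.support, pos_iff_ne_zero] using hN

/-- **Proposition 3(1)**: for the homogeneous firework process on `ℕ`, if
`liminf_n n·(1 − G_N(P(R < n))) > 1` then `P(V) > 0` and the set of environments whose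
quenched survival probability is positive has `μ`-measure `P(N > 0)`. -/
theorem firework_survival_of_liminf
    (PN : Measure ℕ) (PR : Measure ℝ)
    [IsProbabilityMeasure PN] [IsProbabilityMeasure PR]
    (μ : Measure (ℕ → ℕ)) (ν : Measure (ℕ → ℕ → ℝ))
    [IsProbabilityMeasure μ] [IsProbabilityMeasure ν]
    -- the station numbers are i.i.d. with law `PN`
    (hNlaw : ∀ i : ℕ, μ.map (fun f => f i) = PN)
    (hNindep : iIndepFun (fun (i : ℕ) (f : ℕ → ℕ) => f i) μ)
    -- the radii are i.i.d. with law `PR`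
    (hRlaw : ∀ p : ℕ × ℕ, ν.map (fun r => r p.1 p.2) = PR)
    (hRindep : iIndepFun
      (fun (p : ℕ × ℕ) (r : ℕ → ℕ → ℝ) => r p.1 p.2) ν)
    -- the radii take values in `[0, ∞)` and `P(R < 1) ∈ (0,1)`
    (hRnonneg : PR (Set.Iio (0 : ℝ)) = 0)
    (hR1 : 0 < PR (Set.Iio (1 : ℝ)) ∧ PR (Set.Iio (1 : ℝ)) < 1)
    -- `liminf_n n (1 - G_N(P(R < n))) > 1` (the nonnegative sequence is viewed in `ℝ≥0∞`)
    (hliminf : 1 < Filter.liminf (fun n : ℕ =>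
      ENNReal.ofReal ((n : ℝ) * (1 - pgf PN ((PR (Set.Iio (n : ℝ))).toReal)))) Filter.atTop) :
    0 < (μ.prod ν) {p : (ℕ → ℕ) × (ℕ → ℕ → ℝ) | fireworkSurvives p.1 p.2} ∧
    μ {stn | 0 < ν {r | fireworkSurvives stn r}} = PN {k : ℕ | 0 < k} :=
  firework_survival_of_liminf_general PN PR μ ν hNlaw hNindep hRlaw hRindep hliminf
end
end

section
/- Let N be an ℕ-valued random variable with 0 < E[N] < +∞ and R a [0,∞)-valued random variable, and set W := ∑_{n∈ℕ} (1 − G_N(P(R < n))). Then W < +∞ if and only if E[R] < +∞. -/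
open MeasureTheory Filter Set
open scoped ENNReal NNReal

noncomputable section

section Aux
variable (PN : Measure ℕ) [IsProbabilityMeasure PN]

lemma tsum_PN : ∑' k : ℕ, PN {k} = 1 := by
  rw [← measure_univ (μ := PN), ← Set.iUnion_of_singleton ℕ]
  exact (measure_iUnion (fun i j h => by simpa using h) (fun i => measurableSet_singleton i)).symm

lemma summable_p : Summable (fun k : ℕ => (PN {k}).toReal) :=
  ENNReal.summable_toReal (by rw [tsum_PN]; exact ENNReal.one_ne_top)

lemma tsum_p : ∑' k : ℕ, (PN {k}).toReal = 1 := by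
  rw [← ENNReal.tsum_toReal_eq (fun k => measure_ne_top _ _), tsum_PN, ENNReal.toReal_one]

lemma one_sub_pow_le {t : ℝ} (h0 : 0 ≤ t) (h1 : t ≤ 1) (k : ℕ) :
    1 - t ^ k ≤ k * (1 - t) := by
  have := geom_sum_mul t k
  have h : 1 - t ^ k = (∑ i ∈ Finset.range k, t ^ i) * (1 - t) := by ring_nf; linarith [geom_sum_mul t k]
  rw [h]
  apply mul_le_mul_of_nonneg_right _ (by linarith)
  calc (∑ i ∈ Finset.range k, t ^ i) ≤ ∑ i ∈ Finset.range k, 1 :=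
        Finset.sum_le_sum (fun i _ => pow_le_one₀ h0 h1)
    _ = k := by simp

end Aux

section two
variable (PN : Measure ℕ) [IsProbabilityMeasure PN]

lemma summable_pt {t : ℝ} (h0 : 0 ≤ t) (h1 : t ≤ 1) :
    Summable (fun k : ℕ => (PN {k}).toReal * t ^ k) := by
  apply Summable.of_nonneg_of_le (fun k => by positivity)
    (fun k => ?_) (summable_p PN)
  exact mul_le_of_le_one_right ENNReal.toReal_nonneg (pow_le_one₀ h0 h1)

lemma summable_pq {t : ℝ} (h0 : 0 ≤ t) (h1 : t ≤ 1) :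
    Summable (fun k : ℕ => (PN {k}).toReal * (1 - t ^ k)) := by
  have := (summable_p PN).sub (summable_pt PN h0 h1)
  simpa [mul_sub] using this

lemma one_sub_pgf {t : ℝ} (h0 : 0 ≤ t) (h1 : t ≤ 1) :
    1 - pgf PN t = ∑' k : ℕ, (PN {k}).toReal * (1 - t ^ k) := by
  rw [pgf]
  simp only [mul_sub, mul_one]
  rw [Summable.tsum_sub (summable_p PN) (summable_pt PN h0 h1), tsum_p]

end two

section three
variable (PN : Measure ℕ) [IsProbabilityMeasure PN]

lemma lint_eq : ∫⁻ k, (k : ℝ≥0∞) ∂PN = ∑' k : ℕ, (k : ℝ≥0∞) * PN {k} :=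
  lintegral_countable' _

lemma summable_m (hENfin : ∫⁻ k, (k : ℝ≥0∞) ∂PN < ⊤) :
    Summable (fun k : ℕ => (k : ℝ) * (PN {k}).toReal) := by
  have h := ENNReal.summable_toReal (f := fun k : ℕ => (k : ℝ≥0∞) * PN {k})
    (by rw [← lint_eq PN]; exact hENfin.ne)
  simpa [ENNReal.toReal_mul] using h

lemma tsum_m (hENfin : ∫⁻ k, (k : ℝ≥0∞) ∂PN < ⊤) :
    ∑' k : ℕ, (k : ℝ) * (PN {k}).toReal = (∫⁻ k, (k : ℝ≥0∞) ∂PN).toReal := by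
  rw [lint_eq PN, ENNReal.tsum_toReal_eq
    (f := fun k : ℕ => (k : ℝ≥0∞) * PN {k})
    (fun k => ENNReal.mul_ne_top (ENNReal.natCast_ne_top k) (measure_ne_top _ _))]
  simp [ENNReal.toReal_mul]

lemma pgf_upper (hENfin : ∫⁻ k, (k : ℝ≥0∞) ∂PN < ⊤) {t : ℝ} (h0 : 0 ≤ t) (h1 : t ≤ 1) :
    1 - pgf PN t ≤ (∫⁻ k, (k : ℝ≥0∞) ∂PN).toReal * (1 - t) := by
  rw [one_sub_pgf PN h0 h1]
  calc ∑' k : ℕ, (PN {k}).toReal * (1 - t ^ k)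
      ≤ ∑' k : ℕ, ((k : ℝ) * (PN {k}).toReal) * (1 - t) := by
        apply Summable.tsum_le_tsum _ (summable_pq PN h0 h1) ((summable_m PN hENfin).mul_right _)
        intro k
        have := mul_le_mul_of_nonneg_left (one_sub_pow_le h0 h1 k) (ENNReal.toReal_nonneg (a := PN {k}))
        calc (PN {k}).toReal * (1 - t ^ k) ≤ (PN {k}).toReal * ((k : ℝ) * (1 - t)) := this
          _ = ((k : ℝ) * (PN {k}).toReal) * (1 - t) := by ring
    _ = (∫⁻ k, (k : ℝ≥0∞) ∂PN).toReal * (1 - t) := by rw [tsum_mul_right, tsum_m PN hENfin]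

lemma pgf_lower (hENpos : 0 < ∫⁻ k, (k : ℝ≥0∞) ∂PN) :
    ∃ c : ℝ, 0 < c ∧ ∀ t : ℝ, 0 ≤ t → t ≤ 1 → c * (1 - t) ≤ 1 - pgf PN t := by
  have : ∃ k : ℕ, (k : ℝ≥0∞) * PN {k} ≠ 0 := by
    by_contra h
    push_neg at h
    rw [lint_eq] at hENpos
    simp [h] at hENpos
  obtain ⟨k0, hk0⟩ := this
  have hk0ne : k0 ≠ 0 := by rintro rfl; simp at hk0
  have hPN : PN {k0} ≠ 0 := by intro h; simp [h] at hk0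
  refine ⟨(PN {k0}).toReal, ENNReal.toReal_pos hPN (measure_ne_top _ _), fun t h0 h1 => ?_⟩
  rw [one_sub_pgf PN h0 h1]
  calc (PN {k0}).toReal * (1 - t)
      ≤ (PN {k0}).toReal * (1 - t ^ k0) := by
        apply mul_le_mul_of_nonneg_left _ ENNReal.toReal_nonneg
        have : t ^ k0 ≤ t := pow_le_of_le_one h0 h1 hk0ne
        linarith
    _ ≤ ∑' k : ℕ, (PN {k}).toReal * (1 - t ^ k) := by
        apply Summable.le_tsum (summable_pq PN h0 h1) k0
        intro j _
        have : t ^ j ≤ 1 := pow_le_one₀ h0 h1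
        have := ENNReal.toReal_nonneg (a := PN {j})
        nlinarith

end three

section four

lemma floor_eq_tsum (x : ℝ) :
    ∑' n : ℕ, (Set.Ici ((n : ℝ) + 1)).indicator (1 : ℝ → ℝ≥0∞) x = (⌊x⌋₊ : ℝ≥0∞) := by
  have hind : ∀ n : ℕ, (Set.Ici ((n : ℝ) + 1)).indicator (1 : ℝ → ℝ≥0∞) x
      = if n < ⌊x⌋₊ then 1 else 0 := by
    intro n
    by_cases hx : 0 ≤ x
    · have : n < ⌊x⌋₊ ↔ (n : ℝ) + 1 ≤ x := by
        rw [Nat.lt_iff_add_one_le, Nat.le_floor_iff hx]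
        push_cast; rfl
      by_cases h : (n : ℝ) + 1 ≤ x
      · rw [Set.indicator_of_mem (Set.mem_Ici.mpr h), if_pos (this.mpr h)]; rfl
      · rw [Set.indicator_of_notMem (fun hc => h (Set.mem_Ici.mp hc)), if_neg (fun hc => h (this.mp hc))]
    · rw [Nat.floor_of_nonpos (le_of_not_ge hx)]
      rw [Set.indicator_of_notMem (by simp only [Set.mem_Ici]; intro h; exact hx (le_trans (by positivity) h))]
      simp
  simp only [hind]
  rw [tsum_eq_sum (s := Finset.range ⌊x⌋₊) (fun b hb => by
    rw [if_neg]; simpa using hb)]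
  rw [Finset.sum_congr rfl (fun n hn => if_pos (Finset.mem_range.mp hn))]
  simp

lemma tsum_Ici_eq (PR : Measure ℝ) :
    ∑' n : ℕ, PR (Set.Ici ((n : ℝ) + 1)) = ∫⁻ x, (⌊x⌋₊ : ℝ≥0∞) ∂PR := by
  have : ∀ n : ℕ, PR (Set.Ici ((n : ℝ) + 1))
      = ∫⁻ x, (Set.Ici ((n : ℝ) + 1)).indicator (1 : ℝ → ℝ≥0∞) x ∂PR := by
    intro n; rw [lintegral_indicator_one measurableSet_Ici]
  simp only [this]
  rw [← lintegral_tsum (fun n => (measurable_one.indicator measurableSet_Ici).aemeasurable)]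
  exact lintegral_congr (fun x => floor_eq_tsum x)

end four

section five
variable (PR : Measure ℝ) [IsProbabilityMeasure PR]

lemma lint_upper :
    ∫⁻ x, ENNReal.ofReal x ∂PR ≤ (∑' n : ℕ, PR (Set.Ici ((n : ℝ) + 1))) + 1 := by
  rw [tsum_Ici_eq PR]
  have hpt : ∀ x : ℝ, ENNReal.ofReal x ≤ (⌊x⌋₊ : ℝ≥0∞) + 1 := by
    intro x
    have hx : x ≤ (⌊x⌋₊ : ℝ) + 1 := (Nat.lt_floor_add_one x).le
    calc ENNReal.ofReal x ≤ ENNReal.ofReal ((⌊x⌋₊ : ℝ) + 1) := ENNReal.ofReal_le_ofReal hx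
      _ = (⌊x⌋₊ : ℝ≥0∞) + 1 := by
          rw [ENNReal.ofReal_add (by positivity) zero_le_one, ENNReal.ofReal_natCast,
            ENNReal.ofReal_one]
  calc ∫⁻ x, ENNReal.ofReal x ∂PR ≤ ∫⁻ x, ((⌊x⌋₊ : ℝ≥0∞) + 1) ∂PR := lintegral_mono hpt
    _ = (∫⁻ x, (⌊x⌋₊ : ℝ≥0∞) ∂PR) + 1 := by
        rw [lintegral_add_right _ measurable_const, lintegral_const, measure_univ, one_mul]

lemma lint_lower (hRnonneg : PR (Set.Iio (0 : ℝ)) = 0) :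
    ∑' n : ℕ, PR (Set.Ici ((n : ℝ) + 1)) ≤ ∫⁻ x, ENNReal.ofReal x ∂PR := by
  rw [tsum_Ici_eq PR]
  apply lintegral_mono_ae
  have hae : ∀ᵐ x ∂PR, 0 ≤ x := by
    rw [ae_iff]
    convert hRnonneg using 2
    ext x; simp
  filter_upwards [hae] with x hx
  calc (⌊x⌋₊ : ℝ≥0∞) = ENNReal.ofReal (⌊x⌋₊ : ℝ) := (ENNReal.ofReal_natCast _).symm
    _ ≤ ENNReal.ofReal x := ENNReal.ofReal_le_ofReal (Nat.floor_le hx)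

end five



/-- **Theorem (part 1)**: if `0 < E[N] < +∞` then
`W = ∑_{n∈ℕ} (1 − G_N(P(R < n))) < +∞` if and only if `E[R] < +∞`. -/
theorem W_finite_iff_ER_finite
    (PN : Measure ℕ) (PR : Measure ℝ)
    [IsProbabilityMeasure PN] [IsProbabilityMeasure PR]
    -- `R` takes values in `[0, ∞)`
    (hRnonneg : PR (Set.Iio (0 : ℝ)) = 0)
    -- `0 < E[N] < +∞`
    (hENpos : 0 < ∫⁻ k, (k : ℝ≥0∞) ∂PN)
    (hENfin : ∫⁻ k, (k : ℝ≥0∞) ∂PN < ⊤) :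
    Summable (fun n : ℕ => 1 - pgf PN ((PR (Set.Iio (n : ℝ))).toReal)) ↔
      ∫⁻ x, ENNReal.ofReal x ∂PR < ⊤ := by
  have ht0 : ∀ n : ℕ, 0 ≤ (PR (Set.Iio (n : ℝ))).toReal := fun n => ENNReal.toReal_nonneg
  have ht1 : ∀ n : ℕ, (PR (Set.Iio (n : ℝ))).toReal ≤ 1 := fun n => by
    simpa using ENNReal.toReal_mono ENNReal.one_ne_top (prob_le_one (μ := PR))
  have hu : ∀ n : ℕ, 1 - (PR (Set.Iio (n : ℝ))).toReal = (PR (Set.Ici (n : ℝ))).toReal := by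
    intro n
    rw [← Set.compl_Iio, measure_compl measurableSet_Iio (measure_ne_top _ _), measure_univ,
      ENNReal.toReal_sub_of_le prob_le_one ENNReal.one_ne_top, ENNReal.toReal_one]
  have htot : (∑' n : ℕ, PR (Set.Ici ((n : ℕ) : ℝ)))
      = PR (Set.Ici ((0 : ℕ) : ℝ)) + ∑' n : ℕ, PR (Set.Ici ((n : ℝ) + 1)) := by
    rw [tsum_eq_zero_add' (f := fun n : ℕ => PR (Set.Ici ((n : ℕ) : ℝ))) ENNReal.summable]
    norm_num
  have hkey : (∑' n : ℕ, PR (Set.Ici ((n : ℕ) : ℝ))) < ⊤ ↔ ∫⁻ x, ENNReal.ofReal x ∂PR < ⊤ := by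
    constructor
    · intro h
      rw [htot] at h
      exact lt_of_le_of_lt (lint_upper PR)
        (ENNReal.add_lt_top.mpr ⟨(ENNReal.add_lt_top.mp h).2, ENNReal.one_lt_top⟩)
    · intro h
      rw [htot]
      exact ENNReal.add_lt_top.mpr ⟨measure_lt_top _ _,
        lt_of_le_of_lt (lint_lower PR hRnonneg) h⟩
  have hsum_iff : Summable (fun n : ℕ => (PR (Set.Ici ((n : ℕ) : ℝ))).toReal)
      ↔ (∑' n : ℕ, PR (Set.Ici ((n : ℕ) : ℝ))) < ⊤ := by
    constructor
    · intro h
      have h2 := ENNReal.ofReal_tsum_of_nonneg (fun n => ENNReal.toReal_nonneg) h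
      simp only [ENNReal.ofReal_toReal (measure_ne_top PR _)] at h2
      rw [← h2]
      exact ENNReal.ofReal_lt_top
    · intro h
      exact ENNReal.summable_toReal h.ne
  obtain ⟨c, hc, hlow⟩ := pgf_lower PN hENpos
  constructor
  · intro hW
    apply hkey.mp ∘ hsum_iff.mp
    apply Summable.of_nonneg_of_le (fun n => ENNReal.toReal_nonneg)
      (fun n => ?_) (hW.mul_left c⁻¹)
    have h2 : c * (1 - (PR (Set.Iio (n : ℝ))).toReal)
        ≤ 1 - pgf PN ((PR (Set.Iio (n : ℝ))).toReal) := hlow _ (ht0 n) (ht1 n)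
    have h3 := mul_le_mul_of_nonneg_left h2 (inv_nonneg.mpr hc.le)
    rw [← mul_assoc, inv_mul_cancel₀ hc.ne', one_mul, hu n] at h3
    exact h3
  · intro hER
    have hsumu := hsum_iff.mpr (hkey.mpr hER)
    apply Summable.of_nonneg_of_le (fun n => ?_) (fun n => ?_)
      (hsumu.mul_left (∫⁻ k, (k : ℝ≥0∞) ∂PN).toReal)
    · have := hlow _ (ht0 n) (ht1 n)
      nlinarith [ht1 n, hc]
    · have := pgf_upper PN hENfin (ht0 n) (ht1 n)
      rwa [hu n] at this


end
end

section
/- Let N be an ℕ-valued random variable, R a [0,∞)-valued random variable, and let W := ∫_0^∞ (1 − G_N(P(R < t))) dt, where in the integrals below the integrand is taken to be 0 at points where P(R ≥ t) = 0. Then: (1) if there exists M > 0 with P(N ≥ n) ≤ M/n for all n ≥ 1 and ∫_0^∞ P(R ≥ t)·ln(1/P(R ≥ t)) dt < +∞, then W < +∞; (2) if there exists ε > 0 with P(N ≥ n) ≥ ε/n for all n ≥ 1 and ∫_0^∞ P(R ≥ t)·ln(1/P(R ≥ t)) dt = +∞, then W = +∞. -/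
/-!
Write `q = P(R ≥ t)`, so that `P(R < t) = 1 - q`. Summation by parts gives
`1 - G_N(s) = (1 - s) ∑ₙ P(N > n) sⁿ`, and bounding `P(N > n)` above by `M/(n + 1)` or below by
`ε/(n + 1)` compares `s ∑ₙ P(N > n) sⁿ` with `∑ₙ sⁿ⁺¹/(n + 1) = -log(1 - s)`. Hence
`1 - G_N(1 - q) ≤ 2M q log(1/q)` once `q ≤ 1/2`, and `1 - G_N(1 - q) ≥ ε q log(1/q)` always.
Integrating in `t` gives (2) directly, and (1) on the tail where `q ≤ 1/2`; on the bounded rest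
the integrand is at most `1`.
-/

open MeasureTheory Filter Set
open scoped ENNReal NNReal Topology

noncomputable section

theorem pgf_nonneg_s11 (μ : Measure ℕ) {s : ℝ} (hs : 0 ≤ s) : 0 ≤ pgf μ s :=
  tsum_nonneg fun _ => by positivity

section TailSum

variable (μ : Measure ℕ)

theorem tsum_measure_Ici_succ_mul_pow (x : ℝ≥0∞) :
    ∑' n : ℕ, μ (Ici (n + 1)) * x ^ n = ∑' k : ℕ, μ {k} * ∑ n ∈ Finset.range k, x ^ n := by
  simp_rw [← Measure.tsum_indicator_apply_singleton μ _ measurableSet_Ici,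
    ← ENNReal.tsum_mul_right]
  rw [ENNReal.tsum_comm]
  refine tsum_congr fun k => ?_
  rw [Finset.mul_sum, tsum_eq_sum (s := Finset.range k)]
  · refine Finset.sum_congr rfl fun n hn => ?_
    rw [indicator_of_mem (by simpa [Nat.succ_le_iff] using hn)]
  · intro n hn
    rw [indicator_of_notMem (by simpa [Nat.succ_le_iff] using hn), zero_mul]

theorem tsum_toReal_measure_Ici_succ_mul_pow [IsFiniteMeasure μ] {s : ℝ} (hs : 0 ≤ s) :
    ∑' n : ℕ, (μ (Ici (n + 1))).toReal * s ^ n =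
      ∑' k : ℕ, (μ {k}).toReal * ∑ n ∈ Finset.range k, s ^ n := by
  have h := congrArg ENNReal.toReal (tsum_measure_Ici_succ_mul_pow μ (ENNReal.ofReal s))
  rw [ENNReal.tsum_toReal_eq, ENNReal.tsum_toReal_eq] at h
  · simpa [ENNReal.toReal_sum, hs] using h
  · exact fun k => ENNReal.mul_ne_top (measure_ne_top _ _)
      (ENNReal.sum_ne_top.2 fun n _ => ENNReal.pow_ne_top ENNReal.ofReal_ne_top)
  · exact fun n => ENNReal.mul_ne_top (measure_ne_top _ _)
      (ENNReal.pow_ne_top ENNReal.ofReal_ne_top)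

theorem summable_toReal_measure_Ici_succ_mul_pow [IsFiniteMeasure μ] {s : ℝ} (hs0 : 0 ≤ s)
    (hs1 : s < 1) : Summable fun n : ℕ => (μ (Ici (n + 1))).toReal * s ^ (n + 1) := by
  refine ((summable_geometric_of_lt_one hs0 hs1).mul_left (μ univ).toReal).of_nonneg_of_le
    (fun n => by positivity) fun n => ?_
  have hμ : (μ (Ici (n + 1))).toReal ≤ (μ univ).toReal :=
    ENNReal.toReal_mono (measure_ne_top _ _) (measure_mono (subset_univ _))
  calc (μ (Ici (n + 1))).toReal * s ^ (n + 1) ≤ (μ (Ici (n + 1))).toReal * s ^ n :=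
        mul_le_mul_of_nonneg_left (pow_le_pow_of_le_one hs0 hs1.le n.le_succ)
          ENNReal.toReal_nonneg
    _ ≤ (μ univ).toReal * s ^ n := by gcongr

end TailSum

section GeneratingFunction

variable (μ : Measure ℕ) [IsProbabilityMeasure μ]

theorem tsum_measure_singleton_nat : ∑' k : ℕ, μ {k} = 1 := by
  simpa using Measure.tsum_indicator_apply_singleton μ univ MeasurableSet.univ

theorem tsum_toReal_measure_singleton : ∑' k : ℕ, (μ {k}).toReal = 1 := by
  rw [← ENNReal.tsum_toReal_eq fun _ => measure_ne_top _ _, tsum_measure_singleton_nat,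
    ENNReal.toReal_one]

theorem summable_toReal_measure_singleton : Summable fun k : ℕ => (μ {k}).toReal :=
  ENNReal.summable_toReal (by rw [tsum_measure_singleton_nat μ]; exact ENNReal.one_ne_top)

theorem summable_pgf {s : ℝ} (hs0 : 0 ≤ s) (hs1 : s ≤ 1) :
    Summable fun k : ℕ => (μ {k}).toReal * s ^ k :=
  (summable_toReal_measure_singleton μ).of_nonneg_of_le (fun k => by positivity)
    fun k => mul_le_of_le_one_right ENNReal.toReal_nonneg (pow_le_one₀ hs0 hs1)

theorem pgf_one_s11 : pgf μ 1 = 1 := by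
  simpa [pgf] using tsum_toReal_measure_singleton μ

theorem one_sub_pgf_eq {s : ℝ} (hs0 : 0 ≤ s) (hs1 : s ≤ 1) :
    1 - pgf μ s = (1 - s) * ∑' n : ℕ, (μ (Ici (n + 1))).toReal * s ^ n := by
  rw [tsum_toReal_measure_Ici_succ_mul_pow μ hs0, ← tsum_mul_left]
  calc 1 - pgf μ s = ∑' k : ℕ, ((μ {k}).toReal - (μ {k}).toReal * s ^ k) := by
        rw [Summable.tsum_sub (summable_toReal_measure_singleton μ) (summable_pgf μ hs0 hs1),
          tsum_toReal_measure_singleton, pgf]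
    _ = _ := tsum_congr fun k => by rw [mul_left_comm, mul_neg_geom_sum]; ring

theorem pgf_le_one {s : ℝ} (hs0 : 0 ≤ s) (hs1 : s ≤ 1) : pgf μ s ≤ 1 := by
  have hT : 0 ≤ ∑' n : ℕ, (μ (Ici (n + 1))).toReal * s ^ n :=
    tsum_nonneg fun n => by positivity
  have h := one_sub_pgf_eq μ hs0 hs1
  nlinarith

theorem mul_one_sub_pgf_eq {s : ℝ} (hs0 : 0 ≤ s) (hs1 : s ≤ 1) :
    s * (1 - pgf μ s) = (1 - s) * ∑' n : ℕ, (μ (Ici (n + 1))).toReal * s ^ (n + 1) := by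
  rw [one_sub_pgf_eq μ hs0 hs1, mul_left_comm, ← tsum_mul_left]
  simp_rw [pow_succ', mul_left_comm s]

theorem tsum_toReal_measure_Ici_succ_mul_pow_succ_le {M : ℝ}
    (hM : ∀ n : ℕ, 1 ≤ n → (μ (Ici n)).toReal ≤ M / n) {s : ℝ} (hs0 : 0 ≤ s) (hs1 : s < 1) :
    ∑' n : ℕ, (μ (Ici (n + 1))).toReal * s ^ (n + 1) ≤ M * -Real.log (1 - s) := by
  refine hasSum_le (fun n => ?_)
    (summable_toReal_measure_Ici_succ_mul_pow μ hs0 hs1).hasSum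
    ((Real.hasSum_pow_div_log_of_abs_lt_one (abs_lt.2 ⟨by linarith, hs1⟩)).mul_left M)
  have h := hM (n + 1) (by omega)
  push_cast at h
  calc (μ (Ici (n + 1))).toReal * s ^ (n + 1) ≤ M / (n + 1) * s ^ (n + 1) := by gcongr
    _ = M * (s ^ (n + 1) / (n + 1)) := by ring

theorem le_tsum_toReal_measure_Ici_succ_mul_pow_succ {ε : ℝ}
    (hε : ∀ n : ℕ, 1 ≤ n → ε / n ≤ (μ (Ici n)).toReal) {s : ℝ} (hs0 : 0 ≤ s) (hs1 : s < 1) :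
    ε * -Real.log (1 - s) ≤ ∑' n : ℕ, (μ (Ici (n + 1))).toReal * s ^ (n + 1) := by
  refine hasSum_le (fun n => ?_)
    ((Real.hasSum_pow_div_log_of_abs_lt_one (abs_lt.2 ⟨by linarith, hs1⟩)).mul_left ε)
    (summable_toReal_measure_Ici_succ_mul_pow μ hs0 hs1).hasSum
  have h := hε (n + 1) (by omega)
  push_cast at h
  calc ε * (s ^ (n + 1) / (n + 1)) = ε / (n + 1) * s ^ (n + 1) := by ring
    _ ≤ (μ (Ici (n + 1))).toReal * s ^ (n + 1) := by gcongr

theorem one_sub_pgf_one_sub_le {M : ℝ} (hM : ∀ n : ℕ, 1 ≤ n → (μ (Ici n)).toReal ≤ M / n)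
    {q : ℝ} (hq0 : 0 ≤ q) (hq : q ≤ 1 / 2) :
    1 - pgf μ (1 - q) ≤ 2 * M * (q * Real.log (1 / q)) := by
  rcases hq0.eq_or_lt with rfl | hq0
  · simp [pgf_one_s11]
  have hsq : 1 - (1 - q) = q := by ring
  have hkey : (1 - q) * (1 - pgf μ (1 - q)) ≤ q * (M * Real.log (1 / q)) := by
    rw [mul_one_sub_pgf_eq μ (by linarith) (by linarith), hsq, one_div, Real.log_inv]
    gcongr
    simpa [hsq] using tsum_toReal_measure_Ici_succ_mul_pow_succ_le μ hM (s := 1 - q)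
      (by linarith) (by linarith)
  have hG := pgf_le_one μ (s := 1 - q) (by linarith) (by linarith)
  nlinarith

theorem mul_log_one_div_le_one_sub_pgf_one_sub {ε : ℝ}
    (hε : ∀ n : ℕ, 1 ≤ n → ε / n ≤ (μ (Ici n)).toReal) {q : ℝ} (hq0 : 0 ≤ q) (hq1 : q ≤ 1) :
    ε * (q * Real.log (1 / q)) ≤ 1 - pgf μ (1 - q) := by
  rcases hq0.eq_or_lt with rfl | hq0
  · simp [pgf_one_s11]
  have hsq : 1 - (1 - q) = q := by ring
  have hkey : q * (ε * Real.log (1 / q)) ≤ (1 - q) * (1 - pgf μ (1 - q)) := by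
    rw [mul_one_sub_pgf_eq μ (by linarith) (by linarith), hsq, one_div, Real.log_inv]
    gcongr
    simpa [hsq] using le_tsum_toReal_measure_Ici_succ_mul_pow_succ μ hε (s := 1 - q)
      (by linarith) (by linarith)
  have hG := pgf_le_one μ (s := 1 - q) (by linarith) (by linarith)
  nlinarith

end GeneratingFunction

theorem tendsto_measure_Ici_atTop (μ : Measure ℝ) [IsFiniteMeasure μ] :
    Tendsto (fun t => μ (Ici t)) atTop (𝓝 0) := by
  have h := tendsto_measure_iInter_atTop (μ := μ)
    (fun _ => measurableSet_Ici.nullMeasurableSet) antitone_Ici ⟨0, measure_ne_top μ _⟩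
  rwa [iInter_eq_empty_iff.2 fun t => ⟨t + 1, by simp⟩, measure_empty] at h

theorem toReal_measure_Iio_eq_one_sub (μ : Measure ℝ) [IsProbabilityMeasure μ] (t : ℝ) :
    (μ (Iio t)).toReal = 1 - (μ (Ici t)).toReal := by
  simpa only [measureReal_def, compl_Ici] using
    probReal_compl_eq_one_sub (μ := μ) (measurableSet_Ici (a := t))

theorem setLIntegral_Ioi_lt_top_of_le_one_of_eventually_le {f g : ℝ → ℝ≥0∞} {a : ℝ}
    {C : ℝ≥0∞} (hC : C ≠ ∞) (hf : ∀ t, f t ≤ 1) (hfg : ∀ᶠ t in atTop, f t ≤ C * g t)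
    (hg : ∫⁻ t in Ioi a, g t < ∞) : ∫⁻ t in Ioi a, f t < ∞ := by
  obtain ⟨b, hb⟩ := eventually_atTop.1 hfg
  have hab : a ≤ max a b := le_max_left a b
  calc ∫⁻ t in Ioi a, f t ≤ (∫⁻ t in Ioc a (max a b), f t) + ∫⁻ t in Ioi (max a b), f t := by
        rw [← Ioc_union_Ioi_eq_Ioi hab]
        exact lintegral_union_le _ _ _
    _ ≤ volume (Ioc a (max a b)) + C * ∫⁻ t in Ioi a, g t := by
        gcongr
        · calc ∫⁻ t in Ioc a (max a b), f t ≤ ∫⁻ _ in Ioc a (max a b), 1 := lintegral_mono hf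
            _ = volume (Ioc a (max a b)) := setLIntegral_one _
        · calc ∫⁻ t in Ioi (max a b), f t ≤ ∫⁻ t in Ioi (max a b), C * g t :=
                setLIntegral_mono' measurableSet_Ioi fun t ht =>
                  hb t ((le_max_right a b).trans ht.le)
            _ = C * ∫⁻ t in Ioi (max a b), g t := lintegral_const_mul' _ _ hC
            _ ≤ C * ∫⁻ t in Ioi a, g t := by gcongr
    _ < ∞ := ENNReal.add_lt_top.2 ⟨by simp, ENNReal.mul_lt_top hC.lt_top hg⟩

theorem W_alpha_one_general
    (PN : Measure ℕ) (PR : Measure ℝ)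
    [IsProbabilityMeasure PN] [IsProbabilityMeasure PR] :
    -- (1)
    ((∃ M : ℝ, 0 < M ∧
        (∀ n : ℕ, 1 ≤ n → (PN (Set.Ici n)).toReal ≤ M / n) ∧
        ∫⁻ t in Set.Ioi (0 : ℝ), ENNReal.ofReal
          ((PR (Set.Ici t)).toReal * Real.log (1 / (PR (Set.Ici t)).toReal)) < ⊤) →
      ∫⁻ t in Set.Ioi (0 : ℝ),
        ENNReal.ofReal (1 - pgf PN ((PR (Set.Iio t)).toReal)) < ⊤) ∧
    -- (2)
    ((∃ ε : ℝ, 0 < ε ∧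
        (∀ n : ℕ, 1 ≤ n → ε / n ≤ (PN (Set.Ici n)).toReal) ∧
        ∫⁻ t in Set.Ioi (0 : ℝ), ENNReal.ofReal
          ((PR (Set.Ici t)).toReal * Real.log (1 / (PR (Set.Ici t)).toReal)) = ⊤) →
      ∫⁻ t in Set.Ioi (0 : ℝ),
        ENNReal.ofReal (1 - pgf PN ((PR (Set.Iio t)).toReal)) = ⊤) := by
  simp_rw [toReal_measure_Iio_eq_one_sub PR]
  have hq1 (t : ℝ) : (PR (Ici t)).toReal ≤ 1 := measureReal_le_one
  refine ⟨fun ⟨M, hM, hub, hfin⟩ => ?_, fun ⟨ε, hε, hlb, hinf⟩ => ?_⟩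
  · have hsmall : ∀ᶠ t in atTop, (PR (Ici t)).toReal ≤ 1 / 2 :=
      ((ENNReal.tendsto_toReal ENNReal.zero_ne_top).comp
        (tendsto_measure_Ici_atTop PR)).eventually (ge_mem_nhds (by norm_num))
    refine setLIntegral_Ioi_lt_top_of_le_one_of_eventually_le (C := ENNReal.ofReal (2 * M))
      ENNReal.ofReal_ne_top
      (fun t => ENNReal.ofReal_le_one.2 (sub_le_self _ (pgf_nonneg_s11 PN (by linarith [hq1 t]))))
      ?_ hfin
    filter_upwards [hsmall] with t ht
    rw [← ENNReal.ofReal_mul (by positivity)]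
    exact ENNReal.ofReal_le_ofReal (one_sub_pgf_one_sub_le PN hub ENNReal.toReal_nonneg ht)
  · refine top_unique ?_
    calc ⊤ = ENNReal.ofReal ε * ∫⁻ t in Ioi (0 : ℝ), ENNReal.ofReal
          ((PR (Ici t)).toReal * Real.log (1 / (PR (Ici t)).toReal)) := by
          rw [hinf, ENNReal.mul_top (by simpa using hε)]
      _ = _ := (lintegral_const_mul' _ _ ENNReal.ofReal_ne_top).symm
      _ ≤ _ := lintegral_mono fun t => by
          rw [← ENNReal.ofReal_mul hε.le]
          exact ENNReal.ofReal_le_ofReal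
            (mul_log_one_div_le_one_sub_pgf_one_sub PN hlb ENNReal.toReal_nonneg (hq1 t))

/-- **Theorem (parts 4 and 5)**: with `W := ∫_0^∞ (1 − G_N(P(R < t))) dt`:
(1) if `P(N ≥ n) ≤ M/n` for all `n ≥ 1` and `∫_0^∞ P(R ≥ t) ln(1/P(R ≥ t)) dt < +∞`
then `W < +∞`;
(2) if `P(N ≥ n) ≥ ε/n` for all `n ≥ 1` and `∫_0^∞ P(R ≥ t) ln(1/P(R ≥ t)) dt = +∞`
then `W = +∞`.
(In Lean, `Real.log 0 = 0` and `1/0 = 0`, so the integrand `P(R ≥ t)·ln(1/P(R ≥ t))`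
is automatically `0` at points where `P(R ≥ t) = 0`.) -/
theorem W_alpha_one
    (PN : Measure ℕ) (PR : Measure ℝ)
    [IsProbabilityMeasure PN] [IsProbabilityMeasure PR]
    -- `R` takes values in `[0, ∞)`
    (hRnonneg : PR (Set.Iio (0 : ℝ)) = 0) :
    -- (1)
    ((∃ M : ℝ, 0 < M ∧
        (∀ n : ℕ, 1 ≤ n → (PN (Set.Ici n)).toReal ≤ M / n) ∧
        ∫⁻ t in Set.Ioi (0 : ℝ), ENNReal.ofReal
          ((PR (Set.Ici t)).toReal * Real.log (1 / (PR (Set.Ici t)).toReal)) < ⊤) →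
      ∫⁻ t in Set.Ioi (0 : ℝ),
        ENNReal.ofReal (1 - pgf PN ((PR (Set.Iio t)).toReal)) < ⊤) ∧
    -- (2)
    ((∃ ε : ℝ, 0 < ε ∧
        (∀ n : ℕ, 1 ≤ n → ε / n ≤ (PN (Set.Ici n)).toReal) ∧
        ∫⁻ t in Set.Ioi (0 : ℝ), ENNReal.ofReal
          ((PR (Set.Ici t)).toReal * Real.log (1 / (PR (Set.Ici t)).toReal)) = ⊤) →
      ∫⁻ t in Set.Ioi (0 : ℝ),
        ENNReal.ofReal (1 - pgf PN ((PR (Set.Iio t)).toReal)) = ⊤) :=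
  W_alpha_one_general PN PR
end
end

section
/- Let (N_i)_{i∈ℕ} be independent ℕ-valued random variables and let (t_{i,n})_{0≤i≤n} be an array of nonnegative real numbers such that for each fixed i, t_{i,n} → 1 as n → ∞. Then the event {∑_{n=0}^∞ ∏_{i=0}^n t_{i,n}^{N_i} < +∞} is a tail event with respect to the filtration (σ(N_i : i ≤ n))_n, and consequently its probability is either 0 or 1. -/
open MeasureTheory ProbabilityTheory Filter Set Asymptotics
open scoped ENNReal

/-!
Removing the first `k` factors multiplies the `n`-th term by `∏_{i<k} t_{i,n}^{N_i}`, which tends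
to `1`; so the two series are asymptotically equivalent and, summability of real series being
absolute, one converges iff the other does. Hence the event is measurable with respect to
`σ(N_i : i ≥ k)` for every `k`, and Kolmogorov's zero–one law applies.
-/

theorem measurableSet_summable {Ω ι E : Type*} {mΩ : MeasurableSpace Ω} [Countable ι]
    [NormedAddCommGroup E] [NormedSpace ℝ E] [FiniteDimensional ℝ E]
    [MeasurableSpace E] [OpensMeasurableSpace E]
    {f : ι → Ω → E} (hf : ∀ i, Measurable (f i)) :
    MeasurableSet {ω | Summable fun i => f i ω} := by
  have hset : {ω | Summable fun i => f i ω} = (fun ω => ∑' i, ‖f i ω‖ₑ) ⁻¹' {∞}ᶜ := by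
    ext ω
    simp [tsum_enorm_ne_top_iff_summable_norm, summable_norm_iff]
  rw [hset]
  exact (Measurable.tsum fun i => (hf i).enorm) (measurableSet_singleton ∞).compl

theorem isEquivalent_prod_range_prod_Ico {𝕜 : Type*} [NormedField 𝕜] {u : ℕ → ℕ → 𝕜}
    (hu : ∀ i, Tendsto (u i) atTop (nhds 1)) (k : ℕ) :
    (fun n => ∏ i ∈ Finset.range (n + 1), u i n) ~[atTop]
      fun n => ∏ i ∈ Finset.Ico k (n + 1), u i n := by
  have hhead : (fun n => ∏ i ∈ Finset.range k, u i n) ~[atTop] fun _ => (1 : 𝕜) :=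
    (isEquivalent_const_iff_tendsto one_ne_zero).2 <| by
      simpa using tendsto_finsetProd (Finset.range k) fun i _ => hu i
  have htail := IsEquivalent.refl (u := fun n => ∏ i ∈ Finset.Ico k (n + 1), u i n) (l := atTop)
  refine ((hhead.mul htail).congr_left ?_).congr_right ?_
  · filter_upwards [eventually_ge_atTop k] with n hn
    exact Finset.prod_range_mul_prod_Ico _ (by omega)
  · exact Eventually.of_forall fun n => one_mul _

theorem summability_event_is_tail_general
    {Ω : Type*} [MeasurableSpace Ω] (P : Measure Ω) [IsProbabilityMeasure P]
    (N : ℕ → Ω → ℕ) (hNmeas : ∀ i, Measurable (N i))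
    (hNindep : iIndepFun N P)
    (t : ℕ → ℕ → ℝ)
    (hlim : ∀ i, Filter.Tendsto (fun n => t i n) Filter.atTop (nhds 1)) :
    (∀ k : ℕ, MeasurableSet[⨆ i, ⨆ (_ : k ≤ i), MeasurableSpace.comap (N i) inferInstance]
      {ω | Summable (fun n : ℕ => ∏ i ∈ Finset.range (n + 1), t i n ^ N i ω)}) ∧
    (P {ω | Summable (fun n : ℕ => ∏ i ∈ Finset.range (n + 1), t i n ^ N i ω)} = 0 ∨
     P {ω | Summable (fun n : ℕ => ∏ i ∈ Finset.range (n + 1), t i n ^ N i ω)} = 1) := by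
  have htail (k : ℕ) : MeasurableSet[⨆ i, ⨆ (_ : k ≤ i), MeasurableSpace.comap (N i) inferInstance]
      {ω | Summable (fun n : ℕ => ∏ i ∈ Finset.range (n + 1), t i n ^ N i ω)} := by
    have hdrop : {ω | Summable (fun n : ℕ => ∏ i ∈ Finset.range (n + 1), t i n ^ N i ω)} =
        {ω | Summable (fun n : ℕ => ∏ i ∈ Finset.Ico k (n + 1), t i n ^ N i ω)} := by
      ext ω
      exact (isEquivalent_prod_range_prod_Ico (fun i => by simpa using (hlim i).pow (N i ω))
        k).summable_iff_nat
    rw [hdrop]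
    refine measurableSet_summable fun n => Finset.measurable_prod _ fun i hi => ?_
    exact measurable_const.pow <| (comap_measurable (N i)).mono
      (le_iSup₂_of_le i (Finset.mem_Ico.1 hi).1 le_rfl) le_rfl
  refine ⟨htail, measure_zero_or_one_of_measurableSet_limsup_atTop
    (fun i => (hNmeas i).comap_le) hNindep.iIndep ?_⟩
  rw [limsup_eq_iInf_iSup_of_nat]
  exact MeasurableSpace.measurableSet_iInf.2 htail

/-- **Remark (tail event)**: if `(N_i)` are independent `ℕ`-valued random variables and
`(t_{i,n})` is an array of nonnegative reals with `t_{i,n} → 1` as `n → ∞` for each fixed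
`i`, then the event `{∑_n ∏_{i=0}^n t_{i,n}^{N_i} < +∞}` belongs to the tail σ-algebra
`⋂_k σ(N_i : i ≥ k)`, and consequently its probability is `0` or `1`. -/
theorem summability_event_is_tail
    {Ω : Type*} [MeasurableSpace Ω] (P : Measure Ω) [IsProbabilityMeasure P]
    (N : ℕ → Ω → ℕ) (hNmeas : ∀ i, Measurable (N i))
    (hNindep : iIndepFun N P)
    (t : ℕ → ℕ → ℝ) (ht : ∀ i n, 0 ≤ t i n)
    (hlim : ∀ i, Filter.Tendsto (fun n => t i n) Filter.atTop (nhds 1)) :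
    (∀ k : ℕ, MeasurableSet[⨆ i, ⨆ (_ : k ≤ i), MeasurableSpace.comap (N i) inferInstance]
      {ω | Summable (fun n : ℕ => ∏ i ∈ Finset.range (n + 1), t i n ^ N i ω)}) ∧
    (P {ω | Summable (fun n : ℕ => ∏ i ∈ Finset.range (n + 1), t i n ^ N i ω)} = 0 ∨
     P {ω | Summable (fun n : ℕ => ∏ i ∈ Finset.range (n + 1), t i n ^ N i ω)} = 1) :=
  summability_event_is_tail_general P N hNmeas hNindep t hlim
end

section
/- Let (x_i)_{i∈ℕ} be a sequence of nonnegative real numbers and (y_i)_{i∈ℕ} a nondecreasing sequence of real numbers with y_0 > 0 and limsup_{n→∞} (∑_{i=0}^n x_i)/y_n > 0. Then ∑_{i=0}^∞ x_i = +∞ if and only if ∑_{i=0}^∞ x_i/y_i = +∞. -/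
open Filter
open scoped Topology

/-!
Since `y 0 ≤ y i`, summability of `x` gives that of `x / y`. Conversely, let `x / y` be
summable. If `y` is bounded, then `|x i| ≤ (sup y) * |x i / y i|` and `x` is summable.
Otherwise `y → ∞`, and writing `(∑_{i ≤ n} x i) / y n = ∑_{i ≤ n} (x i / y i) (y i / y n)`,
each term tends to `0` and is bounded by `|x i / y i|`, so by dominated convergence the
partial sums divided by `y n` tend to `0`, which contradicts the hypothesis on the limsup.
-/

section

variable {x y : ℕ → ℝ}

theorem Summable.div_of_monotone (hs : Summable x) (hy : Monotone y) (hy0 : 0 < y 0) :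
    Summable fun i => x i / y i :=
  (hs.abs.div_const (y 0)).of_norm_bounded fun i => by
    rw [Real.norm_eq_abs, abs_div, abs_of_pos (hy0.trans_le (hy i.zero_le))]
    exact div_le_div_of_nonneg_left (abs_nonneg _) hy0 (hy i.zero_le)

theorem Summable.of_div_of_bddAbove (hs : Summable fun i => x i / y i) (hpos : ∀ i, 0 < y i)
    (hb : BddAbove (Set.range y)) : Summable x := by
  obtain ⟨M, hM⟩ := hb
  refine (hs.abs.mul_right M).of_norm_bounded fun i => ?_
  calc ‖x i‖ = |x i / y i| * y i := by
        rw [Real.norm_eq_abs, abs_div, abs_of_pos (hpos i), div_mul_cancel₀ _ (hpos i).ne']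
    _ ≤ |x i / y i| * M := mul_le_mul_of_nonneg_left (hM ⟨i, rfl⟩) (abs_nonneg _)

theorem tendsto_sum_range_div_nhds_zero_of_summable_div (hs : Summable fun i => x i / y i)
    (hy : Monotone y) (hpos : ∀ i, 0 < y i) (hytop : Tendsto y atTop atTop) :
    Tendsto (fun n => (∑ i ∈ Finset.range (n + 1), x i) / y n) atTop (𝓝 0) := by
  let f : ℕ → ℕ → ℝ := fun n i => if i ≤ n then x i / y n else 0
  have hf_lim (i : ℕ) : Tendsto (f · i) atTop (𝓝 0) :=
    (tendsto_const_nhds.div_atTop hytop).congr'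
      ((eventually_ge_atTop i).mono fun n hn => (if_pos hn).symm)
  have hf_bound (n i : ℕ) : ‖f n i‖ ≤ |x i / y i| := by
    by_cases hin : i ≤ n
    · rw [show f n i = x i / y n from if_pos hin, Real.norm_eq_abs, abs_div, abs_div,
        abs_of_pos (hpos i), abs_of_pos (hpos n)]
      exact div_le_div_of_nonneg_left (abs_nonneg _) (hpos i) (hy hin)
    · simp [f, hin]
  have hf_tsum (n : ℕ) : ∑' i, f n i = (∑ i ∈ Finset.range (n + 1), x i) / y n := by
    rw [tsum_eq_sum (s := Finset.range (n + 1)) fun i hi => if_neg (by simpa using hi),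
      Finset.sum_div]
    exact Finset.sum_congr rfl fun i hi => if_pos (Nat.lt_succ_iff.mp (Finset.mem_range.mp hi))
  simpa only [hf_tsum, tsum_zero] using
    tendsto_tsum_of_dominated_convergence hs.abs hf_lim (.of_forall hf_bound)

end

theorem divergence_iff_divergence_of_ratios_general
    (x y : ℕ → ℝ) (hy : Monotone y) (hy0 : 0 < y 0)
    (hlimsup : 0 < Filter.limsup (fun n : ℕ =>
      ENNReal.ofReal ((∑ i ∈ Finset.range (n + 1), x i) / y n)) Filter.atTop) :
    ¬ Summable x ↔ ¬ Summable (fun i => x i / y i) := by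
  have hpos : ∀ i, 0 < y i := fun i => hy0.trans_le (hy i.zero_le)
  refine ⟨mt fun hs => ?_, mt fun hs => hs.div_of_monotone hy hy0⟩
  by_cases hb : BddAbove (Set.range y)
  · exact hs.of_div_of_bddAbove hpos hb
  · have h0 := (ENNReal.tendsto_ofReal (tendsto_sum_range_div_nhds_zero_of_summable_div hs hy hpos
      (tendsto_atTop_atTop_of_monotone' hy hb))).limsup_eq
    rw [ENNReal.ofReal_zero] at h0
    exact absurd h0 hlimsup.ne'

/-- **Lemma (part 1)**: if `(x_i)` is nonnegative, `(y_i)` is nondecreasing with `y_0 > 0`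
and `limsup_n (∑_{i=0}^n x_i)/y_n > 0` (the nonnegative quotients being viewed in `ℝ≥0∞`),
then `∑ x_i = +∞` if and only if `∑ x_i/y_i = +∞`. -/
theorem divergence_iff_divergence_of_ratios
    (x y : ℕ → ℝ) (hx : ∀ i, 0 ≤ x i) (hy : Monotone y) (hy0 : 0 < y 0)
    (hlimsup : 0 < Filter.limsup (fun n : ℕ =>
      ENNReal.ofReal ((∑ i ∈ Finset.range (n + 1), x i) / y n)) Filter.atTop) :
    ¬ Summable x ↔ ¬ Summable (fun i => x i / y i) :=
  divergence_iff_divergence_of_ratios_general x y hy hy0 hlimsup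
end
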